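/- arXiv:2403.17090 — 6 statements merged into one kernel-verified Lean document; each statement's English description precedes it below -/
import Mathlib

section
/- Every free-collinear set in a planar graph is a free set: if for all x_1 < ... < x_s there is a straight-line crossing-free drawing of G mapping v_i to (x_i, 0), then for all x_1 < ... < x_s and all y_1,...,y_s there is a straight-line crossing-free drawing mapping v_i to (x_i, y_i). -/
/-- A straight-line crossing-free drawing of a graph: an injective placement of the
vertices in the plane such that no vertex lies in the open segment representing an
edge, and any two distinct edges intersect only in shared endpoints. -/
def IsCFDrawing {V : Type*} (G : SimpleGraph V) (p : V → ℝ × ℝ) : Prop :=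
  Function.Injective p ∧
  (∀ u v w : V, G.Adj u v → w ≠ u → w ≠ v → p w ∉ openSegment ℝ (p u) (p v)) ∧
  (∀ a b c d : V, G.Adj a b → G.Adj c d → ({a, b} : Set V) ≠ ({c, d} : Set V) →
    segment ℝ (p a) (p b) ∩ segment ℝ (p c) (p d) ⊆
      p '' (({a, b} : Set V) ∩ ({c, d} : Set V)))

/-- A graph is planar if it admits a straight-line crossing-free drawing (Fáry). -/
def IsPlanar {V : Type*} (G : SimpleGraph V) : Prop :=
  ∃ p : V → ℝ × ℝ, IsCFDrawing G p

/-- An ordered free set: for all target points with strictly increasing x-coordinates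
there is a straight-line crossing-free drawing placing `v i` at `(x i, y i)`. -/
def IsFreeSeq {V : Type*} (G : SimpleGraph V) {s : ℕ} (v : Fin s → V) : Prop :=
  ∀ x y : Fin s → ℝ, StrictMono x →
    ∃ p : V → ℝ × ℝ, IsCFDrawing G p ∧ ∀ i, p (v i) = (x i, y i)

/-- An unordered free set: some enumeration of `S` is an ordered free set. -/
def IsFreeSet {V : Type*} (G : SimpleGraph V) (S : Finset V) : Prop :=
  ∃ v : Fin S.card → V, Function.Injective v ∧ (∀ i, v i ∈ S) ∧ IsFreeSeq G v

open Filter Set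

/-- Two moving segments that are disjoint at time `0` stay disjoint for small times. -/
lemma evt_seg_disjoint (A B C D : ℝ → ℝ × ℝ)
    (hA : Continuous A) (hB : Continuous B) (hC : Continuous C) (hD : Continuous D)
    (h0 : ∀ z ∈ segment ℝ (A 0) (B 0), z ∉ segment ℝ (C 0) (D 0)) :
    ∀ᶠ ε in nhds (0:ℝ), ∀ z ∈ segment ℝ (A ε) (B ε), z ∉ segment ℝ (C ε) (D ε) := by
  have key : ∀ᶠ ε in nhds (0:ℝ), ∀ ts ∈ (Set.Icc (0:ℝ) 1 ×ˢ Set.Icc (0:ℝ) 1),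
      A ε + ts.1 • (B ε - A ε) ≠ C ε + ts.2 • (D ε - C ε) := by
    apply IsCompact.eventually_forall_of_forall_eventually (isCompact_Icc.prod isCompact_Icc)
    rintro ⟨t, s⟩ ⟨ht, hs⟩
    have hF : Continuous (fun q : ℝ × (ℝ × ℝ) =>
        (A q.1 + q.2.1 • (B q.1 - A q.1)) - (C q.1 + q.2.2 • (D q.1 - C q.1))) := by
      fun_prop
    have hne : (A 0 + t • (B 0 - A 0)) - (C 0 + s • (D 0 - C 0)) ≠ 0 := by
      rw [sub_ne_zero]
      intro hz
      apply h0 (A 0 + t • (B 0 - A 0))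
      · rw [segment_eq_image']; exact ⟨t, ht, rfl⟩
      · rw [hz, segment_eq_image']; exact ⟨s, hs, rfl⟩
    have := (hF.tendsto ((0:ℝ), (t, s))).eventually_ne hne
    exact this.mono fun q hq => sub_ne_zero.1 hq
  refine key.mono fun ε hε z hz1 hz2 => ?_
  rw [segment_eq_image'] at hz1 hz2
  obtain ⟨t, ht, rfl⟩ := hz1
  obtain ⟨s, hs, heq⟩ := hz2
  exact hε (t, s) ⟨ht, hs⟩ heq.symm

/-- Two moving segments emanating from a common moving endpoint, whose initial
directions are not positively parallel, intersect only at the common endpoint,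
for small times. -/
lemma evt_shared (E B D : ℝ → ℝ × ℝ)
    (hE : Continuous E) (hB : Continuous B) (hD : Continuous D)
    (hnB : B 0 ≠ E 0) (hnD : D 0 ≠ E 0)
    (h1 : ¬ ∃ r : ℝ, 0 < r ∧ D 0 - E 0 = r • (B 0 - E 0)) :
    ∀ᶠ ε in nhds (0:ℝ), ∀ z ∈ segment ℝ (E ε) (B ε) ∩ segment ℝ (E ε) (D ε), z = E ε := by
  set f : ℝ → ℝ := fun ε =>
    (B ε - E ε).1 * (D ε - E ε).2 - (B ε - E ε).2 * (D ε - E ε).1 with hf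
  set g : ℝ → ℝ := fun ε =>
    (B ε - E ε).1 * (D ε - E ε).1 + (B ε - E ε).2 * (D ε - E ε).2 with hg
  have hfc : Continuous f := by fun_prop
  have hgc : Continuous g := by fun_prop
  have hkey : f 0 ≠ 0 ∨ g 0 < 0 := by
    by_contra hcon
    push_neg at hcon
    obtain ⟨hf0, hg0⟩ := hcon
    set a1 := (B 0 - E 0).1 with ha1
    set a2 := (B 0 - E 0).2 with ha2
    set b1 := (D 0 - E 0).1 with hb1
    set b2 := (D 0 - E 0).2 with hb2
    have hu1 : B 0 - E 0 ≠ 0 := sub_ne_zero.2 hnB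
    have hu2 : D 0 - E 0 ≠ 0 := sub_ne_zero.2 hnD
    have hu1' : ¬ (a1 = 0 ∧ a2 = 0) := by
      rintro ⟨h1', h2'⟩; exact hu1 (Prod.ext h1' h2')
    have hpos : 0 < a1 ^ 2 + a2 ^ 2 := by
      rcases not_and_or.1 hu1' with h | h
      · nlinarith [sq_nonneg a2, (mul_self_pos).2 h]
      · nlinarith [sq_nonneg a1, (mul_self_pos).2 h]
    have hdet : a1 * b2 - a2 * b1 = 0 := hf0
    have hdot : 0 ≤ a1 * b1 + a2 * b2 := hg0
    set r := (a1 * b1 + a2 * b2) / (a1 ^ 2 + a2 ^ 2) with hr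
    have hb1' : b1 = r * a1 := by
      rw [hr]; field_simp; linear_combination (-a2) * hdet
    have hb2' : b2 = r * a2 := by
      rw [hr]; field_simp; linear_combination a1 * hdet
    have hrnn : 0 ≤ r := div_nonneg hdot hpos.le
    have hr0 : r ≠ 0 := by
      intro h
      apply hu2
      rw [h, zero_mul] at hb1' hb2'
      exact Prod.ext hb1' hb2'
    exact h1 ⟨r, lt_of_le_of_ne hrnn (Ne.symm hr0),
      Prod.ext (by simp only [Prod.smul_fst, smul_eq_mul]; exact hb1')
        (by simp only [Prod.smul_snd, smul_eq_mul]; exact hb2')⟩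
  have hev : ∀ᶠ ε in nhds (0:ℝ), f ε ≠ 0 ∨ g ε < 0 := by
    rcases hkey with hf' | hg'
    · exact ((hfc.tendsto 0).eventually_ne hf').mono fun ε h => Or.inl h
    · exact ((hgc.tendsto 0).eventually_lt_const hg').mono fun ε h => Or.inr h
  refine hev.mono fun ε hε z hz => ?_
  obtain ⟨hz1, hz2⟩ := hz
  rw [segment_eq_image'] at hz1 hz2
  obtain ⟨t, ht, rfl⟩ := hz1
  obtain ⟨s, hs, heq⟩ := hz2
  have heq' : E ε + s • (D ε - E ε) = E ε + t • (B ε - E ε) := heq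
  have heq2 : s • (D ε - E ε) = t • (B ε - E ε) := by
    rwa [add_right_inj] at heq'
  show E ε + t • (B ε - E ε) = E ε
  suffices hts : t • (B ε - E ε) = 0 by rw [hts, add_zero]
  by_contra hne0
  have htne : t ≠ 0 := fun h => hne0 (by rw [h, zero_smul])
  have ht0 : 0 < t := lt_of_le_of_ne ht.1 (Ne.symm htne)
  have hu1 : B ε - E ε ≠ 0 := fun h => hne0 (by rw [h, smul_zero])
  have hsne : s ≠ 0 := by
    intro h
    rw [h, zero_smul] at heq2
    exact hne0 heq2.symm
  have hs0 : 0 < s := lt_of_le_of_ne hs.1 (Ne.symm hsne)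
  have c1 : s * (D ε - E ε).1 = t * (B ε - E ε).1 := by
    have := congrArg Prod.fst heq2; simpa using this
  have c2 : s * (D ε - E ε).2 = t * (B ε - E ε).2 := by
    have := congrArg Prod.snd heq2; simpa using this
  set a1 := (B ε - E ε).1 with ha1
  set a2 := (B ε - E ε).2 with ha2
  set b1 := (D ε - E ε).1 with hb1
  set b2 := (D ε - E ε).2 with hb2
  have hu1' : ¬ (a1 = 0 ∧ a2 = 0) := by
    rintro ⟨h1', h2'⟩; exact hu1 (Prod.ext h1' h2')
  have hpos : 0 < a1 ^ 2 + a2 ^ 2 := by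
    rcases not_and_or.1 hu1' with h | h
    · nlinarith [sq_nonneg a2, (mul_self_pos).2 h]
    · nlinarith [sq_nonneg a1, (mul_self_pos).2 h]
  rcases hε with hf' | hg'
  · apply hf'
    have h0 : t * s * (a1 * b2 - a2 * b1) = 0 := by
      linear_combination (t * a1) * c2 - (t * a2) * c1
    have : f ε = a1 * b2 - a2 * b1 := rfl
    rw [this]
    rcases mul_eq_zero.1 h0 with h | h
    · exact absurd h (mul_ne_zero htne hsne)
    · exact h
  · have hsg : s * g ε = t * (a1 ^ 2 + a2 ^ 2) := by
      have : g ε = a1 * b1 + a2 * b2 := rfl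
      rw [this]; linear_combination a1 * c1 + a2 * c2
    nlinarith [hsg, hpos, ht0, hs0, hg']
/-- In a crossing-free drawing, the directions of two distinct edges at a common
endpoint are not positively parallel. -/
lemma not_pos_parallel {V : Type*} {G : SimpleGraph V} {p : V → ℝ × ℝ}
    (hp : IsCFDrawing G p) {e b' d' : V} (h1 : G.Adj e b') (h2 : G.Adj e d')
    (hbd : b' ≠ d') : ¬ ∃ r : ℝ, 0 < r ∧ p d' - p e = r • (p b' - p e) := by
  rintro ⟨r, hr, heq⟩
  rcases lt_trichotomy r 1 with hlt | hone | hgt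
  · apply hp.2.1 e b' d' h1 h2.ne.symm hbd.symm
    rw [openSegment_eq_image']
    refine ⟨r, ⟨hr, hlt⟩, ?_⟩
    show p e + r • (p b' - p e) = p d'
    rw [← heq]; abel
  · rw [hone, one_smul] at heq
    have : p d' = p b' := by
      have := congrArg (· + p e) heq
      simpa using this
    exact hbd (hp.1 this).symm
  · apply hp.2.1 e d' b' h2 h1.ne.symm hbd
    rw [openSegment_eq_image']
    refine ⟨r⁻¹, ⟨inv_pos.2 (lt_trans one_pos hgt), inv_lt_one_of_one_lt₀ hgt⟩, ?_⟩
    show p e + r⁻¹ • (p d' - p e) = p b'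
    rw [heq, smul_smul, inv_mul_cancel₀ (ne_of_gt (lt_trans one_pos hgt)), one_smul]
    abel

/-- Crossing-freeness is preserved by composing with an injective affine map. -/
lemma IsCFDrawing.comp_affine {V : Type*} {G : SimpleGraph V} {p : V → ℝ × ℝ}
    (hp : IsCFDrawing G p) (f : (ℝ × ℝ) →ᵃ[ℝ] (ℝ × ℝ)) (hf : Function.Injective f) :
    IsCFDrawing G (fun u => f (p u)) := by
  obtain ⟨h1, h2, h3⟩ := hp
  refine ⟨hf.comp h1, ?_, ?_⟩
  · intro u v w hadj hwu hwv hmem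
    rw [← image_openSegment] at hmem
    obtain ⟨z, hz, hze⟩ := hmem
    rw [hf hze] at hz
    exact h2 u v w hadj hwu hwv hz
  · intro a b c d hab hcd hne z hz
    rw [← image_segment, ← image_segment] at hz
    obtain ⟨⟨z1, hz1, e1⟩, ⟨z2, hz2, e2⟩⟩ := hz
    have hz12 : z1 = z2 := hf (e1.trans e2.symm)
    subst hz12
    obtain ⟨u, hu, hue⟩ := h3 a b c d hab hcd hne ⟨hz1, hz2⟩
    exact ⟨u, hu, by show f (p u) = z; rw [hue, e1]⟩

/-- For each pair of edges, the crossing-freeness constraint holds for small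
perturbation times. -/
lemma evt_cond3 {V : Type*} {G : SimpleGraph V} (P : ℝ → V → ℝ × ℝ)
    (hP : ∀ u, Continuous fun ε => P ε u) (hp : IsCFDrawing G (P 0))
    (a b c d : V) (hab : G.Adj a b) (hcd : G.Adj c d)
    (hne : ({a, b} : Set V) ≠ ({c, d} : Set V)) :
    ∀ᶠ ε in nhds (0:ℝ), segment ℝ (P ε a) (P ε b) ∩ segment ℝ (P ε c) (P ε d) ⊆
      P ε '' (({a, b} : Set V) ∩ ({c, d} : Set V)) := by
  by_cases hac : a = c
  · subst hac
    have hbd : b ≠ d := fun h => hne (by rw [h])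
    have h1 := not_pos_parallel hp hab hcd hbd
    have hnB : P 0 b ≠ P 0 a := fun h => hab.ne (hp.1 h).symm
    have hnD : P 0 d ≠ P 0 a := fun h => hcd.ne (hp.1 h).symm
    refine (evt_shared (fun ε => P ε a) (fun ε => P ε b) (fun ε => P ε d)
      (hP a) (hP b) (hP d) hnB hnD h1).mono fun ε hε z hz => ?_
    exact ⟨a, ⟨by simp, by simp⟩, (hε z hz).symm⟩
  by_cases had : a = d
  · subst had
    have hbc : b ≠ c := fun h => hne (by rw [h]; exact Set.pair_comm a c)
    have h1 := not_pos_parallel hp hab hcd.symm hbc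
    have hnB : P 0 b ≠ P 0 a := fun h => hab.ne (hp.1 h).symm
    have hnD : P 0 c ≠ P 0 a := fun h => hcd.ne (hp.1 h)
    refine (evt_shared (fun ε => P ε a) (fun ε => P ε b) (fun ε => P ε c)
      (hP a) (hP b) (hP c) hnB hnD h1).mono fun ε hε z hz => ?_
    obtain ⟨hz1, hz2⟩ := hz
    rw [segment_symm] at hz2
    exact ⟨a, ⟨by simp, by simp⟩, (hε z ⟨hz1, hz2⟩).symm⟩
  by_cases hbc : b = c
  · subst hbc
    have had' : a ≠ d := fun h => hne (by rw [h]; exact Set.pair_comm d b)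
    have h1 := not_pos_parallel hp hab.symm hcd had'
    have hnB : P 0 a ≠ P 0 b := fun h => hab.ne (hp.1 h)
    have hnD : P 0 d ≠ P 0 b := fun h => hcd.ne (hp.1 h).symm
    refine (evt_shared (fun ε => P ε b) (fun ε => P ε a) (fun ε => P ε d)
      (hP b) (hP a) (hP d) hnB hnD h1).mono fun ε hε z hz => ?_
    obtain ⟨hz1, hz2⟩ := hz
    rw [segment_symm] at hz1
    exact ⟨b, ⟨by simp, by simp⟩, (hε z ⟨hz1, hz2⟩).symm⟩
  by_cases hbd : b = d
  · subst hbd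
    have hac' : a ≠ c := fun h => hne (by rw [h])
    have h1 := not_pos_parallel hp hab.symm hcd.symm hac'
    have hnB : P 0 a ≠ P 0 b := fun h => hab.ne (hp.1 h)
    have hnD : P 0 c ≠ P 0 b := fun h => hcd.ne (hp.1 h)
    refine (evt_shared (fun ε => P ε b) (fun ε => P ε a) (fun ε => P ε c)
      (hP b) (hP a) (hP c) hnB hnD h1).mono fun ε hε z hz => ?_
    obtain ⟨hz1, hz2⟩ := hz
    rw [segment_symm] at hz1 hz2
    exact ⟨b, ⟨by simp, by simp⟩, (hε z ⟨hz1, hz2⟩).symm⟩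
  · have hempty : (({a, b} : Set V) ∩ ({c, d} : Set V)) = ∅ := by
      apply Set.eq_empty_iff_forall_notMem.2
      rintro u ⟨hu1, hu2⟩
      simp only [Set.mem_insert_iff, Set.mem_singleton_iff] at hu1 hu2
      rcases hu1 with rfl | rfl <;> rcases hu2 with rfl | rfl <;> tauto
    have h0 : ∀ z ∈ segment ℝ (P 0 a) (P 0 b), z ∉ segment ℝ (P 0 c) (P 0 d) := by
      intro z hz1 hz2
      have := hp.2.2 a b c d hab hcd hne ⟨hz1, hz2⟩
      rw [hempty] at this
      simpa using this
    refine (evt_seg_disjoint _ _ _ _ (hP a) (hP b) (hP c) (hP d) h0).mono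
      fun ε hd z hz => absurd hz.2 (hd z hz.1)

theorem stmt_7 {V : Type*} [Fintype V] (G : SimpleGraph V) (hG : IsPlanar G)
    {s : ℕ} (v : Fin s → V)
    (h : ∀ x : Fin s → ℝ, StrictMono x →
      ∃ p : V → ℝ × ℝ, IsCFDrawing G p ∧ ∀ i, p (v i) = (x i, 0)) :
    IsFreeSeq G v := by
  intro x y hx
  obtain ⟨p, hp, hpx⟩ := h x hx
  have hvinj : Function.Injective v := by
    intro i j hij
    apply hx.injective
    have hpv : p (v i) = p (v j) := by rw [hij]
    rw [hpx i, hpx j] at hpv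
    exact congrArg Prod.fst hpv
  classical
  set Y : V → ℝ := fun u => if hu : ∃ i, v i = u then y hu.choose else 0 with hY
  have hYv : ∀ i, Y (v i) = y i := by
    intro i
    have hex : ∃ j, v j = v i := ⟨i, rfl⟩
    have hY1 : Y (v i) = y hex.choose := by rw [hY]; simp only; rw [dif_pos hex]
    rw [hY1]
    congr 1
    exact hvinj hex.choose_spec
  set P : ℝ → V → ℝ × ℝ := fun ε u => ((p u).1, (p u).2 + ε * Y u) with hPdef
  have hP0 : P 0 = p := by funext u; rw [hPdef]; simp
  have hPc : ∀ u, Continuous fun ε => P ε u := by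
    intro u
    apply Continuous.prodMk continuous_const
    exact continuous_const.add (continuous_id.mul continuous_const)
  have hp0 : IsCFDrawing G (P 0) := hP0 ▸ hp
  have H1 : ∀ᶠ ε in nhds (0:ℝ), ∀ u w : V, u ≠ w → P ε u ≠ P ε w := by
    rw [eventually_all]; intro u
    rw [eventually_all]; intro w
    by_cases huw : u = w
    · exact Filter.Eventually.of_forall fun ε hne => absurd huw hne
    · have hne0 : P 0 u - P 0 w ≠ 0 := sub_ne_zero.2 fun hh => huw (hp0.1 hh)
      have := (((hPc u).sub (hPc w)).tendsto 0).eventually_ne hne0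
      exact this.mono fun ε hε _ => sub_ne_zero.1 hε
  have H2 : ∀ᶠ ε in nhds (0:ℝ), ∀ u v' w : V, G.Adj u v' → w ≠ u → w ≠ v' →
      P ε w ∉ openSegment ℝ (P ε u) (P ε v') := by
    rw [eventually_all]; intro u
    rw [eventually_all]; intro v'
    rw [eventually_all]; intro w
    by_cases hcond : G.Adj u v' ∧ w ≠ u ∧ w ≠ v'
    · obtain ⟨huv, hwu, hwv⟩ := hcond
      have h0 : ∀ z ∈ segment ℝ (P 0 u) (P 0 v'), z ∉ segment ℝ (P 0 w) (P 0 w) := by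
        intro z hz1 hz2
        rw [segment_same, Set.mem_singleton_iff] at hz2
        subst hz2
        rw [← insert_endpoints_openSegment] at hz1
        rcases hz1 with h' | h' | h'
        · exact hwu (hp0.1 h')
        · exact hwv (hp0.1 h')
        · exact hp0.2.1 u v' w huv hwu hwv h'
      exact (evt_seg_disjoint _ _ _ _ (hPc u) (hPc v') (hPc w) (hPc w) h0).mono
        fun ε hd _ _ _ hmem =>
          hd _ (openSegment_subset_segment ℝ _ _ hmem) (left_mem_segment ℝ _ _)
    · exact Filter.Eventually.of_forall fun ε h1 h2 h3 => absurd ⟨h1, h2, h3⟩ hcond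
  have H3 : ∀ᶠ ε in nhds (0:ℝ), ∀ a b c d : V, G.Adj a b → G.Adj c d →
      ({a, b} : Set V) ≠ ({c, d} : Set V) →
      segment ℝ (P ε a) (P ε b) ∩ segment ℝ (P ε c) (P ε d) ⊆
        P ε '' (({a, b} : Set V) ∩ ({c, d} : Set V)) := by
    rw [eventually_all]; intro a
    rw [eventually_all]; intro b
    rw [eventually_all]; intro c
    rw [eventually_all]; intro d
    by_cases hcond : G.Adj a b ∧ G.Adj c d ∧ ({a, b} : Set V) ≠ ({c, d} : Set V)
    · obtain ⟨h1', h2', h3'⟩ := hcond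
      exact (evt_cond3 P hPc hp0 a b c d h1' h2' h3').mono fun ε hε _ _ _ => hε
    · exact Filter.Eventually.of_forall fun ε h1 h2 h3 => absurd ⟨h1, h2, h3⟩ hcond
  have H : ∀ᶠ ε in nhdsWithin (0:ℝ) (Set.Ioi 0),
      IsCFDrawing G (P ε) ∧ ε ∈ Set.Ioi (0:ℝ) := by
    apply Filter.Eventually.and _ eventually_mem_nhdsWithin
    apply Filter.Eventually.filter_mono nhdsWithin_le_nhds
    filter_upwards [H1, H2, H3] with ε e1 e2 e3
    exact ⟨fun {q r} hqr => by_contra fun hne => e1 q r hne hqr, e2, e3⟩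
  obtain ⟨ε, hCF, hεpos⟩ := H.exists
  have hεne : (ε:ℝ) ≠ 0 := ne_of_gt hεpos
  set L : (ℝ × ℝ) →ₗ[ℝ] (ℝ × ℝ) := (LinearMap.fst ℝ ℝ ℝ).prod (ε⁻¹ • LinearMap.snd ℝ ℝ ℝ)
    with hL
  have hLval : ∀ z : ℝ × ℝ, L.toAffineMap z = (z.1, ε⁻¹ * z.2) := fun z => rfl
  have hLinj : Function.Injective L.toAffineMap := by
    intro z w hzw
    rw [hLval, hLval, Prod.mk.injEq] at hzw
    exact Prod.ext hzw.1 (mul_left_cancel₀ (inv_ne_zero hεne) hzw.2)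
  refine ⟨fun u => L.toAffineMap (P ε u), hCF.comp_affine L.toAffineMap hLinj, fun i => ?_⟩
  have hPv : P ε (v i) = (x i, ε * y i) := by
    rw [hPdef]; simp only
    rw [hpx i, hYv i]
    simp
  show L.toAffineMap (P ε (v i)) = (x i, y i)
  rw [hPv, hLval]
  simp [inv_mul_cancel_left₀ hεne]
end

section
/- If a planar graph G has a free set of size at least k, then fix(G) ≥ √k, i.e., for every straight-line drawing Γ of G there is a straight-line crossing-free drawing of G in which at least √k vertices occupy the same positions as in Γ. -/
open Function Finset

theorem injective_of_lt_imp_ne {α β : Type*} [LinearOrder α] {f : α → β}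
    (h : ∀ x y, x < y → f x ≠ f y) : Injective f := by
  intro x y hxy
  rcases lt_trichotomy x y with h1 | h1 | h1
  · exact absurd hxy (h _ _ h1)
  · exact h1
  · exact absurd hxy.symm (h _ _ h1)

-- ES copy (adapted)
theorem my_erdos_szekeres {α : Type*} [LinearOrder α] {r s n : ℕ} {f : Fin n → α}
    (hn : r * s < n) (hf : Injective f) :
    (∃ t : Finset (Fin n), r < t.card ∧ StrictMonoOn f ↑t) ∨
      ∃ t : Finset (Fin n), s < t.card ∧ StrictAntiOn f ↑t := by
  -- Given an index `i`, produce the set of increasing (resp., decreasing) subsequences which ends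
  -- at `i`.
  let inc_sequences_ending_in : Fin n → Finset (Finset (Fin n)) := fun i =>
    univ.powerset.filter fun t => Finset.max t = i ∧ StrictMonoOn f ↑t
  let dec_sequences_ending_in : Fin n → Finset (Finset (Fin n)) := fun i =>
    univ.powerset.filter fun t => Finset.max t = i ∧ StrictAntiOn f ↑t
  -- The singleton sequence is in both of the above collections.
  -- (This is useful to show that the maximum length subsequence is at least 1, and that the set
  -- of subsequences is nonempty.)
  have inc_i : ∀ i, {i} ∈ inc_sequences_ending_in i := fun i => by
    simp [inc_sequences_ending_in, StrictMonoOn]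
  have dec_i : ∀ i, {i} ∈ dec_sequences_ending_in i := fun i => by
    simp [dec_sequences_ending_in, StrictAntiOn]
  -- Define the pair of labels: at index `i`, the pair is the maximum length of an increasing
  -- subsequence ending at `i`, paired with the maximum length of a decreasing subsequence ending
  -- at `i`.
  -- We call these labels `(a_i, b_i)`.
  let ab' : Fin n → ℕ × ℕ := by
    intro i
    apply
      (max' ((inc_sequences_ending_in i).image card) (Nonempty.image ⟨{i}, inc_i i⟩ _),
        max' ((dec_sequences_ending_in i).image card) (Nonempty.image ⟨{i}, dec_i i⟩ _))
  -- Porting note: it costs many resources to unfold `ab'` so we obscure the definition: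
  generalize hab : ab' = ab
  -- It now suffices to show that one of the labels is 'big' somewhere. In particular, if the
  -- first in the pair is more than `r` somewhere, then we have an increasing subsequence in our
  -- set, and if the second is more than `s` somewhere, then we have a decreasing subsequence.
  rsuffices ⟨i, hi⟩ : ∃ i, r < (ab i).1 ∨ s < (ab i).2
  · refine Or.imp ?_ ?_ hi
    on_goal 1 =>
      have : (ab i).1 ∈ image card (inc_sequences_ending_in i) := by
        simp only [← hab]; exact max'_mem _ (Nonempty.image ⟨{i}, inc_i i⟩ _)
    on_goal 2 =>
      have : (ab i).2 ∈ image card (dec_sequences_ending_in i) := by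
        simp only [← hab]; exact max'_mem _ (Nonempty.image ⟨{i}, dec_i i⟩ _)
    all_goals
      intro hi
      rw [mem_image] at this
      obtain ⟨t, ht₁, ht₂⟩ := this
      refine ⟨t, by rwa [ht₂], ?_⟩
      rw [mem_filter] at ht₁
      apply ht₁.2.2
  -- Show first that the pair of labels is unique.
  have : Injective ab := by
    simp only [← hab]
    apply injective_of_lt_imp_ne
    intro i j k q
    injection q with q₁ q₂
    -- We have two cases: `f i < f j` or `f j < f i`.
    -- In the former we'll show `a_i < a_j`, and in the latter we'll show `b_i < b_j`.
    cases lt_or_gt_of_ne fun _ => ne_of_lt ‹i < j› (hf ‹f i = f j›)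
    on_goal 1 =>
      apply ne_of_lt _ q₁
      have : (ab' i).1 ∈ image card (inc_sequences_ending_in i) := by exact max'_mem _ (Nonempty.image ⟨{i}, inc_i i⟩ _)
    on_goal 2 =>
      apply ne_of_lt _ q₂
      have : (ab' i).2 ∈ image card (dec_sequences_ending_in i) := by exact max'_mem _ (Nonempty.image ⟨{i}, dec_i i⟩ _)
    all_goals
      -- Reduce to showing there is a subsequence of length `a_i + 1` which ends at `j`.
      rw [Nat.lt_iff_add_one_le]
      apply le_max'
      rw [mem_image] at this ⊢
      -- In particular we take the subsequence `t` of length `a_i` which ends at `i`, by definition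
      -- of `a_i`
      rcases this with ⟨t, ht₁, ht₂⟩
      rw [mem_filter] at ht₁
      -- Ensure `t` ends at `i`.
      have : t.max = i := by simp only [ht₁.2.1]
      -- Now our new subsequence is given by adding `j` at the end of `t`.
      refine ⟨insert j t, ?_, ?_⟩
      -- First make sure it's valid, i.e., that this subsequence ends at `j` and is increasing
      · rw [mem_filter]
        refine ⟨?_, ?_, ?_⟩
        · rw [mem_powerset]; apply subset_univ
        -- It ends at `j` since `i < j`.
        · convert max_insert (a := j) (s := t)
          rw [ht₁.2.1, max_eq_left]
          apply WithBot.coe_le_coe.mpr (le_of_lt ‹i < j›)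
        -- To show it's increasing (i.e., `f` is monotone increasing on `t.insert j`), we do cases
        -- on what the possibilities could be - either in `t` or equals `j`.
        simp only [StrictMonoOn, StrictAntiOn, coe_insert, Set.mem_insert_iff, mem_coe]
        -- Most of the cases are just bashes.
        rintro x ⟨rfl | _⟩ y ⟨rfl | _⟩ _
        · apply (irrefl _ ‹j < j›).elim
        · exfalso
          apply not_le_of_gt (_root_.trans ‹i < j› ‹j < y›) (le_max_of_eq ‹y ∈ t› ‹t.max = i›)
        · first
          | apply lt_of_le_of_lt _ ‹f i < f j›
          | apply lt_of_lt_of_le ‹f j < f i› _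
          rcases lt_or_eq_of_le (le_max_of_eq ‹x ∈ t› ‹t.max = i›) with (_ | rfl)
          · apply le_of_lt (ht₁.2.2 ‹x ∈ t› (mem_of_max ‹t.max = i›) ‹x < i›)
          · rfl
        · apply ht₁.2.2 ‹x ∈ t› ‹y ∈ t› ‹x < y›
      -- Finally show that this new subsequence is one longer than the old one.
      · rw [card_insert_of_notMem, ht₂]
        intro
        apply not_le_of_gt ‹i < j› (le_max_of_eq ‹j ∈ t› ‹t.max = i›)
  -- Finished both goals!
  -- Now that we have uniqueness of each label, it remains to do some counting to finish off.
  -- Suppose all the labels are small.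
  by_contra! q
  -- Then the labels `(a_i, b_i)` all fit in the following set: `{ (x,y) | 1 ≤ x ≤ r, 1 ≤ y ≤ s }`
  let ran : Finset (ℕ × ℕ) := (range r).image Nat.succ ×ˢ (range s).image Nat.succ
  -- which we prove here.
  have : image ab univ ⊆ ran := by
    -- First some logical shuffling
    rintro ⟨x₁, x₂⟩
    simp only [ran, mem_image, exists_prop, mem_range, mem_univ, mem_product, true_and,
      Prod.ext_iff]
    rintro ⟨i, rfl, rfl⟩
    specialize q i
    -- Show `1 ≤ a_i` and `1 ≤ b_i`, which is easy from the fact that `{i}` is an increasing and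
    -- decreasing subsequence which we did right near the top.
    have z : 1 ≤ (ab i).1 ∧ 1 ≤ (ab i).2 := by
      simp only [← hab]
      constructor <;>
        · apply le_max'
          rw [mem_image]
          exact ⟨{i}, by solve_by_elim, card_singleton i⟩
    -- Need to get `a_i ≤ r`, here phrased as: there is some `a < r` with `a+1 = a_i`.
    exact ⟨⟨(ab i).1 - 1, by omega⟩, (ab i).2 - 1, by omega⟩
  -- To get our contradiction, it suffices to prove `n ≤ r * s`
  apply not_le_of_gt hn
  -- Which follows from considering the cardinalities of the subset above, since `ab` is injective.
  simpa [ran, Nat.succ_injective, card_image_of_injective, ‹Injective ab›] using card_le_card this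



/-- CF drawings are preserved by linear equivalences of the plane. -/
lemma IsCFDrawing.comp_linearEquiv {V : Type*} {G : SimpleGraph V} {p : V → ℝ × ℝ}
    (h : IsCFDrawing G p) (e : (ℝ × ℝ) ≃ₗ[ℝ] (ℝ × ℝ)) :
    IsCFDrawing G (fun w => e (p w)) := by
  obtain ⟨hinj, hopen, hseg⟩ := h
  have himg : ∀ x y : ℝ × ℝ, segment ℝ (e x) (e y) = e '' segment ℝ x y := fun x y =>
    (image_segment ℝ e.toLinearMap.toAffineMap x y).symm
  have himgo : ∀ x y : ℝ × ℝ, openSegment ℝ (e x) (e y) = e '' openSegment ℝ x y := fun x y =>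
    (image_openSegment ℝ e.toLinearMap.toAffineMap x y).symm
  refine ⟨e.injective.comp hinj, ?_, ?_⟩
  · intro u v w huv hwu hwv hmem
    rw [himgo] at hmem
    obtain ⟨z, hz, hze⟩ := hmem
    rw [show z = p w from e.injective hze] at hz
    exact hopen u v w huv hwu hwv hz
  · intro a b c d hab hcd hne z hz
    rw [himg, himg] at hz
    obtain ⟨⟨z1, hz1, hz1e⟩, ⟨z2, hz2, hz2e⟩⟩ := hz
    have : z1 = z2 := e.injective (hz1e.trans hz2e.symm)
    subst this
    obtain ⟨w, hw, hwz⟩ := hseg a b c d hab hcd hne ⟨hz1, hz2⟩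
    exact ⟨w, hw, by show e (p w) = z; rw [hwz, hz1e]⟩

noncomputable def shearEquiv (c : ℝ) : (ℝ × ℝ) ≃ₗ[ℝ] (ℝ × ℝ) where
  toFun q := (q.1 + c * q.2, q.2)
  invFun q := (q.1 - c * q.2, q.2)
  left_inv q := by simp
  right_inv q := by simp
  map_add' q r := by simp [Prod.ext_iff]; ring
  map_smul' r q := by simp [Prod.ext_iff]; ring

noncomputable def negxEquiv : (ℝ × ℝ) ≃ₗ[ℝ] (ℝ × ℝ) where
  toFun q := (-q.1, q.2)
  invFun q := (-q.1, q.2)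
  left_inv q := by simp
  right_inv q := by simp
  map_add' q r := by simp [Prod.ext_iff]; ring
  map_smul' r q := by simp [Prod.ext_iff]

/-- Any strictly monotone partial assignment along a strictly monotone index map
extends to a strictly monotone map on all of `Fin s`. -/
lemma exists_strictMono_extension {m s : ℕ} (g : Fin m → Fin s) (hg : StrictMono g)
    (x : Fin m → ℝ) (hx : StrictMono x) :
    ∃ X : Fin s → ℝ, StrictMono X ∧ ∀ i, X (g i) = x i := by
  rcases Nat.eq_zero_or_pos m with hm | hm
  · subst hm
    exact ⟨fun j => ((j : ℕ) : ℝ), fun i j hij => by simpa using (Nat.cast_lt (α := ℝ)).mpr (Fin.lt_def.mp hij), fun i => i.elim0⟩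
  -- clamped versions over ℕ
  have hlt : ∀ n : ℕ, min n (m - 1) < m := fun n => by omega
  set x' : ℕ → ℝ := fun n => x ⟨min n (m - 1), hlt n⟩ with hx'
  set g' : ℕ → ℕ := fun n => (g ⟨min n (m - 1), hlt n⟩ : ℕ) with hg'
  have hx'lt : ∀ n (hn : n < m), x' n = x ⟨n, hn⟩ := by
    intro n hn
    have hmin : n ⊓ (m - 1) = n := by omega
    simp only [hx', hmin]
  have hg'lt : ∀ n (hn : n < m), g' n = (g ⟨n, hn⟩ : ℕ) := by
    intro n hn
    have hmin : n ⊓ (m - 1) = n := by omega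
    simp only [hg', hmin]
  have hgap : ∀ i ∈ Finset.range (m - 1), g' i < g' (i + 1) ∧ x' i < x' (i + 1) := by
    intro i hi
    rw [Finset.mem_range] at hi
    have h1 : i < m := by omega
    have h2 : i + 1 < m := by omega
    rw [hg'lt i h1, hg'lt (i+1) h2, hx'lt i h1, hx'lt (i+1) h2]
    have hfl : (⟨i, h1⟩ : Fin m) < ⟨i+1, h2⟩ := by simp [Fin.lt_def]
    exact ⟨hg hfl, hx hfl⟩
  -- choose a small positive slope ε
  obtain ⟨ε, hε, hkey⟩ :
      ∃ ε : ℝ, 0 < ε ∧ ∀ i ∈ Finset.range (m - 1),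
        ε * ((g' (i + 1) : ℝ) - (g' i : ℝ)) ≤ x' (i + 1) - x' i := by
    rcases Finset.eq_empty_or_nonempty (Finset.range (m - 1)) with he | he
    · exact ⟨1, one_pos, by simp [he]⟩
    · refine ⟨(Finset.range (m-1)).inf' he
        (fun i => (x' (i + 1) - x' i) / ((g' (i + 1) : ℝ) - (g' i : ℝ))), ?_, ?_⟩
      · rw [Finset.lt_inf'_iff]
        intro i hi
        obtain ⟨h1, h2⟩ := hgap i hi
        have : (0:ℝ) < (g' (i+1) : ℝ) - (g' i : ℝ) := by
          have : (g' i : ℝ) < g' (i+1) := by exact_mod_cast h1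
          linarith
        exact div_pos (by linarith) this
      · intro i hi
        obtain ⟨h1, h2⟩ := hgap i hi
        have hpos : (0:ℝ) < (g' (i+1) : ℝ) - (g' i : ℝ) := by
          have : (g' i : ℝ) < g' (i+1) := by exact_mod_cast h1
          linarith
        have hle := Finset.inf'_le (b := i)
          (f := fun i => (x' (i + 1) - x' i) / ((g' (i + 1) : ℝ) - (g' i : ℝ))) hi
        calc _ ≤ (x' (i + 1) - x' i) / ((g' (i + 1) : ℝ) - (g' i : ℝ))
                  * ((g' (i + 1) : ℝ) - (g' i : ℝ)) := by
              apply mul_le_mul_of_nonneg_right hle hpos.le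
          _ = x' (i + 1) - x' i := by field_simp
  set F : ℕ → ℝ := fun n => x' n - ε * (g' n : ℝ) with hF
  set X : Fin s → ℝ := fun j => ε * (j : ℕ) + F 0 +
    ∑ i ∈ Finset.range (m - 1), (if g' (i + 1) ≤ (j : ℕ) then F (i + 1) - F i else 0) with hX
  have hFpos : ∀ i ∈ Finset.range (m - 1), 0 ≤ F (i + 1) - F i := by
    intro i hi
    have := hkey i hi
    simp only [hF]
    linarith
  refine ⟨X, ?_, ?_⟩
  · intro j j' hjj'
    have hjn : (j : ℕ) < (j' : ℕ) := hjj'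
    simp only [hX]
    have h1 : ε * ((j:ℕ) : ℝ) < ε * ((j':ℕ) : ℝ) := by
      apply mul_lt_mul_of_pos_left _ hε
      exact_mod_cast hjn
    have h2 : ∑ i ∈ Finset.range (m - 1), (if g' (i + 1) ≤ (j : ℕ) then F (i + 1) - F i else 0)
        ≤ ∑ i ∈ Finset.range (m - 1), (if g' (i + 1) ≤ (j' : ℕ) then F (i + 1) - F i else 0) := by
      apply Finset.sum_le_sum
      intro i hi
      by_cases h : g' (i + 1) ≤ (j : ℕ)
      · rw [if_pos h, if_pos (h.trans hjn.le)]
      · rw [if_neg h]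
        by_cases h' : g' (i + 1) ≤ (j' : ℕ)
        · rw [if_pos h']; exact hFpos i hi
        · rw [if_neg h']
    linarith
  · intro I
    simp only [hX]
    have hIm : (I : ℕ) < m := I.2
    have hcond : ∀ i ∈ Finset.range (m - 1),
        (g' (i + 1) ≤ ((g I : Fin s) : ℕ)) ↔ i < (I : ℕ) := by
      intro i hi
      rw [Finset.mem_range] at hi
      have h2 : i + 1 < m := by omega
      rw [hg'lt (i+1) h2]
      constructor
      · intro h
        have h3 : (⟨i+1, h2⟩ : Fin m) ≤ I := hg.le_iff_le.mp (Fin.le_def.mpr h)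
        have h4 := Fin.le_def.mp h3
        simp only [Fin.val_mk] at h4
        omega
      · intro h
        have : (⟨i+1, h2⟩ : Fin m) ≤ I := by simp [Fin.le_def]; omega
        exact Fin.le_def.mp (hg.monotone this)
    have : ∑ i ∈ Finset.range (m - 1), (if g' (i + 1) ≤ ((g I) : ℕ) then F (i + 1) - F i else 0)
        = ∑ i ∈ Finset.range ((I : ℕ)), (F (i + 1) - F i) := by
      rw [Finset.sum_congr rfl (fun i hi => by rw [if_congr (hcond i hi) rfl rfl])]
      rw [← Finset.sum_filter]
      congr 1
      ext i
      simp only [Finset.mem_filter, Finset.mem_range]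
      omega
    rw [this, Finset.sum_range_sub]
    simp only [hF, hx'lt (I : ℕ) hIm, hg'lt (I : ℕ) hIm, Fin.eta]
    ring

/-- A free sequence can also be placed at targets with strictly *decreasing*
x-coordinates, by reflecting the plane. -/
lemma IsFreeSeq.place_anti {V : Type*} {G : SimpleGraph V} {s : ℕ} {v : Fin s → V}
    (hv : IsFreeSeq G v) (x y : Fin s → ℝ) (hx : StrictAnti x) :
    ∃ p : V → ℝ × ℝ, IsCFDrawing G p ∧ ∀ i, p (v i) = (x i, y i) := by
  obtain ⟨p, hp, hpv⟩ := hv (fun i => -(x i)) y (fun i j hij => neg_lt_neg (hx hij))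
  refine ⟨fun w => negxEquiv (p w), hp.comp_linearEquiv negxEquiv, fun i => ?_⟩
  show negxEquiv (p (v i)) = _
  rw [hpv i]
  show (-(-(x i)), y i) = (x i, y i)
  simp

/-- Place the vertices along a strictly monotone index subsequence at arbitrary targets
whose x-coordinates are strictly monotone (increasing or decreasing). -/
lemma IsFreeSeq.place_subseq {V : Type*} {G : SimpleGraph V} {s L : ℕ} {v : Fin s → V}
    (hv : IsFreeSeq G v) (g : Fin L → Fin s) (hg : StrictMono g) (T : Fin s → ℝ × ℝ)
    (hT : StrictMono (fun i => (T (g i)).1) ∨ StrictAnti (fun i => (T (g i)).1)) :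
    ∃ q : V → ℝ × ℝ, IsCFDrawing G q ∧ ∀ i, q (v (g i)) = T (g i) := by
  rcases hT with hT | hT
  · obtain ⟨X, hX, hXg⟩ := exists_strictMono_extension g hg _ hT
    obtain ⟨q, hq, hqv⟩ := hv X (fun j => (T j).2) hX
    exact ⟨q, hq, fun i => by rw [hqv (g i), hXg i]⟩
  · obtain ⟨X, hX, hXg⟩ := exists_strictMono_extension g hg
      (fun i => -((T (g i)).1)) (fun i j hij => neg_lt_neg (hT hij))
    obtain ⟨q, hq, hqv⟩ := hv.place_anti (fun j => -(X j)) (fun j => (T j).2)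
      (fun i j hij => neg_lt_neg (hX hij))
    refine ⟨q, hq, fun i => ?_⟩
    rw [hqv (g i), hXg i, neg_neg]


theorem stmt_8 {V : Type*} [Fintype V] (G : SimpleGraph V) (hG : IsPlanar G)
    (k : ℕ)
    (hfree : ∃ (s : ℕ) (v : Fin s → V), k ≤ s ∧ Function.Injective v ∧ IsFreeSeq G v)
    (Γ : V → ℝ × ℝ) (hΓ : Function.Injective Γ) :
    ∃ p : V → ℝ × ℝ, IsCFDrawing G p ∧
      Real.sqrt k ≤ ({w : V | p w = Γ w}.ncard : ℝ) := by
  classical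
  obtain ⟨s, v, hks, hvinj, hv⟩ := hfree
  rcases Nat.eq_zero_or_pos k with hk | hk
  · obtain ⟨p, hp⟩ := hG
    exact ⟨p, hp, by simp only [hk, Nat.cast_zero, Real.sqrt_zero]; exact Nat.cast_nonneg _⟩
  have hs : 0 < s := lt_of_lt_of_le hk hks
  set P : Fin s → ℝ × ℝ := fun i => Γ (v i) with hP
  have hPinj : Injective P := hΓ.comp hvinj
  -- choose a shear constant making all x-coordinates distinct
  set B : Finset ℝ := Finset.image
    (fun ij : Fin s × Fin s => ((P ij.2).1 - (P ij.1).1) / ((P ij.1).2 - (P ij.2).2))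
    Finset.univ with hB
  obtain ⟨c, hc⟩ := Infinite.exists_notMem_finset B
  set a : Fin s → ℝ := fun i => (P i).1 + c * (P i).2 with ha
  have hainj : Injective a := by
    intro i j hij
    by_contra hne
    by_cases hy : (P i).2 = (P j).2
    · have hx1 : (P i).1 = (P j).1 := by
        simp only [ha] at hij
        rw [hy] at hij
        linarith
      exact hne (hPinj (Prod.ext hx1 hy))
    · apply hc
      rw [hB, Finset.mem_image]
      refine ⟨(i, j), Finset.mem_univ _, ?_⟩
      have hd : (P i).2 - (P j).2 ≠ 0 := fun h => hy (by linarith)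
      field_simp
      simp only [ha] at hij
      linarith
  -- Erdős–Szekeres
  have hsq : Nat.sqrt (s - 1) * Nat.sqrt (s - 1) < s := by
    have := Nat.sqrt_le (s - 1)
    omega
  have hES := my_erdos_szekeres hsq hainj
  -- in either case, get a strictly monotone index subsequence of length L
  have key : ∃ (t : Finset (Fin s)), Nat.sqrt (s - 1) < t.card ∧
      (StrictMonoOn a ↑t ∨ StrictAntiOn a ↑t) := by
    rcases hES with ⟨t, h1, h2⟩ | ⟨t, h1, h2⟩
    exacts [⟨t, h1, Or.inl h2⟩, ⟨t, h1, Or.inr h2⟩]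
  obtain ⟨t, htcard, hmono⟩ := key
  set L := t.card with hL
  set g : Fin L → Fin s := fun i => ((t.orderIsoOfFin rfl) i : Fin s) with hg
  have hgmem : ∀ i, g i ∈ t := fun i => ((t.orderIsoOfFin rfl) i).2
  have hgmono : StrictMono g := fun i j hij => by
    have := (t.orderIsoOfFin rfl).strictMono hij
    exact this
  -- targets: sheared positions
  set T : Fin s → ℝ × ℝ := fun j => shearEquiv c (P j) with hT
  have hT1 : ∀ j, (T j).1 = a j := fun j => rfl
  have hTmono : StrictMono (fun i => (T (g i)).1) ∨ StrictAnti (fun i => (T (g i)).1) := by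
    rcases hmono with hm | hm
    · exact Or.inl (fun i j hij => by
        show (T (g i)).1 < (T (g j)).1
        rw [hT1, hT1]; exact hm (hgmem i) (hgmem j) (hgmono hij))
    · exact Or.inr (fun i j hij => by
        show (T (g j)).1 < (T (g i)).1
        rw [hT1, hT1]; exact hm (hgmem i) (hgmem j) (hgmono hij))
  obtain ⟨q, hq, hqv⟩ := hv.place_subseq g hgmono T hTmono
  refine ⟨fun w => (shearEquiv c).symm (q w), hq.comp_linearEquiv (shearEquiv c).symm, ?_⟩
  have hfix : ∀ i : Fin L, (shearEquiv c).symm (q (v (g i))) = Γ (v (g i)) := by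
    intro i
    rw [hqv i]
    show (shearEquiv c).symm (shearEquiv c (P (g i))) = _
    rw [LinearEquiv.symm_apply_apply]
  -- count fixed vertices
  have hsub : ↑(Finset.image (fun i => v (g i)) Finset.univ) ⊆
      {w : V | (shearEquiv c).symm (q w) = Γ w} := by
    intro w hw
    simp only [Finset.coe_image, Set.mem_image, Finset.coe_univ, Set.mem_univ] at hw
    obtain ⟨i, _, rfl⟩ := hw
    exact hfix i
  have hcard : (Finset.image (fun i => v (g i)) Finset.univ).card = L := by
    rw [Finset.card_image_of_injective _ (show Function.Injective (fun i => v (g i)) from hvinj.comp hgmono.injective), Finset.card_univ,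
      Fintype.card_fin]
  have hn1 : (L : ℝ) ≤ ({w : V | (shearEquiv c).symm (q w) = Γ w}.ncard : ℝ) := by
    have := Set.ncard_le_ncard hsub (Set.toFinite _)
    rw [Set.ncard_coe_finset, hcard] at this
    exact_mod_cast this
  have hkL : k ≤ L * L := by
    have h1 : s - 1 < (Nat.sqrt (s - 1) + 1) * (Nat.sqrt (s - 1) + 1) := Nat.lt_succ_sqrt _
    have h2 : Nat.sqrt (s - 1) + 1 ≤ L := htcard
    set N := (Nat.sqrt (s - 1) + 1) * (Nat.sqrt (s - 1) + 1) with hN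
    calc k ≤ s := hks
      _ ≤ N := by omega
      _ ≤ L * L := hN ▸ Nat.mul_le_mul h2 h2
  have : Real.sqrt k ≤ (L : ℝ) := by
    rw [show (L : ℝ) = Real.sqrt ((L : ℝ) * (L : ℝ)) from
      (Real.sqrt_mul_self (Nat.cast_nonneg L)).symm]
    apply Real.sqrt_le_sqrt
    exact_mod_cast hkL
  linarith
end

section
/- Let G be an edge-maximal outerplane graph on n ≥ 4 vertices with outer cycle O, and let G' be the subgraph of G consisting only of the chords of O. Then G' has an independent set of size at least n/2 + 1. -/
/-- Two vertices of a convex `n`-gon (with vertices `0, 1, …, n-1` in cyclic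
order) are consecutive on the outer cycle. -/
def PolyAdj (n : ℕ) (a b : Fin n) : Prop :=
  (a.val + 1) % n = b.val ∨ (b.val + 1) % n = a.val

/-- Two chords `{a,b}` (with `a < b`) and `{c,d}` (with `c < d`) of a convex
polygon cross. -/
def ChordCross {n : ℕ} (a b c d : Fin n) : Prop :=
  (a < c ∧ c < b ∧ b < d) ∨ (c < a ∧ a < d ∧ d < b)

/-- A combinatorial model of an edge-maximal outerplane graph on `n` vertices:
the outer Hamiltonian cycle `0,1,…,n-1` together with a maximal set of pairwise
non-crossing chords. -/
structure MaxOuterplanar (n : ℕ) where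
  chord : Fin n → Fin n → Prop
  lt_of_chord : ∀ a b, chord a b → a < b
  not_poly : ∀ a b, chord a b → ¬ PolyAdj n a b
  noncross : ∀ a b c d, chord a b → chord c d → ¬ ChordCross a b c d
  maximal : ∀ a b : Fin n, a < b → ¬ PolyAdj n a b → ¬ chord a b →
    ∃ c d, chord c d ∧ ChordCross a b c d

/-!
Cut the polygon open at a vertex lying on no chord (one lies strictly inside every chord) and
relabel it `n - 1`; the vertices `0, …, n - 2` then span a triangulated sub-polygon. Splitting a
sub-polygon `l, …, r` at the apex `c` of its triangle on `{l, r}` shows, by induction, that each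
of `[l, r]`, `[l, r)`, `(l, r]`, `(l, r)` contains an independent set with more than half of its
vertices: the sets for the two sides are combined after dropping `c`, since apart from `{l, r}`
no chord joins them; for `[l, r]` the parity of `r - c` decides which endpoint to drop. For
`[0, n - 2]` this gives `n / 2` vertices, and `n - 1` is one more.
-/

open Finset

theorem Nat.add_mod_eq_or_of_lt {a n : ℕ} (k : ℕ) (ha : a < n) :
    (a + k) % n = a + k % n ∨ (a + k) % n + n = a + k % n := by
  rw [Nat.add_mod_eq_ite, Nat.mod_eq_of_lt ha]
  split_ifs <;> omega

/-- `ChordCross` for vertices labelled by natural numbers. -/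
def Crosses (a b c d : ℕ) : Prop :=
  (a < c ∧ c < b ∧ b < d) ∨ (c < a ∧ a < d ∧ d < b)

/-- Pairwise non-crossing chords `{a, b}`, `a < b`, of the convex polygon `0, 1, …, n - 1`;
no chord is a side of the polygon. -/
structure ChordDiagram (n : ℕ) where
  chord : ℕ → ℕ → Prop
  add_two_le : ∀ {a b}, chord a b → a + 2 ≤ b
  lt : ∀ {a b}, chord a b → b < n
  ne_outer : ∀ {b}, chord 0 b → b + 1 ≠ n
  not_crosses : ∀ {a b c d}, chord a b → chord c d → ¬ Crosses a b c d

namespace ChordDiagram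

variable {n : ℕ} (D : ChordDiagram n)

def IsIndep (S : Finset ℕ) : Prop := ∀ x ∈ S, ∀ y ∈ S, ¬ D.chord x y

def HasIndep (I : Finset ℕ) (k : ℕ) : Prop := ∃ S ⊆ I, D.IsIndep S ∧ k ≤ 2 * #S

def Isolated (v : ℕ) : Prop := ∀ ⦃x y⦄, D.chord x y → x ≠ v ∧ y ≠ v

/-- The vertices `l, …, r` span a sub-polygon: no chord crosses `{l, r}`. -/
def Sealed (l r : ℕ) : Prop := ∀ ⦃x y⦄, D.chord x y → ¬ Crosses l r x y

/-- Each of the four intervals with ends `l`, `r` contains an independent set with more than half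
of its vertices. -/
structure IndepBounds (l r : ℕ) : Prop where
  icc : D.HasIndep (Icc l r) (r - l + 2)
  ico : D.HasIndep (Ico l r) (r - l + 1)
  ioc : D.HasIndep (Ioc l r) (r - l + 1)
  ioo : D.HasIndep (Ioo l r) (r - l)

variable {D}

theorem chord_bounds {a b : ℕ} (h : D.chord a b) :
    a + 2 ≤ b ∧ b < n ∧ (a = 0 → b + 1 ≠ n) :=
  ⟨D.add_two_le h, D.lt h, fun ha => D.ne_outer (ha ▸ h)⟩

theorem HasIndep.mono {I J : Finset ℕ} {k k' : ℕ} (h : D.HasIndep I k) (hIJ : I ⊆ J)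
    (hk : k' ≤ k) : D.HasIndep J k' := by
  obtain ⟨S, hSI, hS, hkS⟩ := h
  exact ⟨S, hSI.trans hIJ, hS, hk.trans hkS⟩

theorem HasIndep.add_one_of_odd {I : Finset ℕ} {k : ℕ} (h : D.HasIndep I k) (hk : Odd k) :
    D.HasIndep I (k + 1) := by
  obtain ⟨S, hSI, hS, hkS⟩ := h
  obtain ⟨j, rfl⟩ := hk
  exact ⟨S, hSI, hS, by omega⟩

theorem HasIndep.union {I J : Finset ℕ} {k m : ℕ} (hI : D.HasIndep I k) (hJ : D.HasIndep J m)
    (hlt : ∀ x ∈ I, ∀ y ∈ J, x < y) (hno : ∀ x ∈ I, ∀ y ∈ J, ¬ D.chord x y) :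
    D.HasIndep (I ∪ J) (k + m) := by
  obtain ⟨S, hSI, hS, hkS⟩ := hI
  obtain ⟨T, hTJ, hT, hmT⟩ := hJ
  have hdisj : Disjoint S T :=
    disjoint_left.2 fun x hxS hxT => (hlt x (hSI hxS) x (hTJ hxT)).false
  refine ⟨S ∪ T, union_subset_union hSI hTJ, ?_, by rw [card_union_of_disjoint hdisj]; omega⟩
  intro x hx y hy hxy
  rcases mem_union.1 hx with hx | hx <;> rcases mem_union.1 hy with hy | hy
  · exact hS x hx y hy hxy
  · exact hno x (hSI hx) y (hTJ hy) hxy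
  · have := hlt y (hSI hy) x (hTJ hx)
    have := D.add_two_le hxy
    omega
  · exact hT x hx y hy hxy

theorem hasIndep_singleton (x : ℕ) : D.HasIndep {x} 2 := by
  refine ⟨{x}, subset_rfl, ?_, by simp⟩
  simp only [IsIndep, mem_singleton]
  rintro _ rfl _ rfl h
  have := D.add_two_le h
  omega

theorem hasIndep_Ico_two (a : ℕ) : D.HasIndep (Ico a (a + 2)) 4 := by
  refine ⟨Ico a (a + 2), subset_rfl, ?_, by simp⟩
  intro x hx y hy hxy
  have := D.add_two_le hxy
  simp only [mem_Ico] at hx hy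
  omega

theorem sealed_succ (l : ℕ) : D.Sealed l (l + 1) := by
  intro x y _ h
  simp only [Crosses] at h
  omega

theorem sealed_of_chord {l r : ℕ} (h : D.chord l r) : D.Sealed l r :=
  fun _ _ hxy => D.not_crosses h hxy

/-- A chord inside `[l, r]` passing over `c` can only be `{l, r}`. -/
theorem chord_cases_of_sealed {l c r x y : ℕ} (hl : D.Sealed l c) (hr : D.Sealed c r)
    (h : D.chord x y) : x < l ∨ r < y ∨ c ≤ x ∨ y ≤ c ∨ (x = l ∧ y = r) := by
  have := hl h
  have := hr h
  simp only [Crosses] at *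
  omega

/-- The apex `c` of the triangle on `{l, r}` is the largest vertex with `{l, c}` sealed. -/
theorem exists_apex {l r : ℕ} (h : D.Sealed l r) (hlr : l + 2 ≤ r) :
    ∃ c, l < c ∧ c < r ∧ D.Sealed l c ∧ D.Sealed c r := by
  classical
  obtain ⟨c, hc, hmax⟩ := exists_max_image ((Ioo l r).filter (D.Sealed l ·)) id
    ⟨l + 1, mem_filter.2 ⟨mem_Ioo.2 ⟨by omega, by omega⟩, sealed_succ l⟩⟩
  obtain ⟨hc, hlc⟩ := mem_filter.1 hc
  rw [mem_Ioo] at hc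
  refine ⟨c, hc.1, hc.2, hlc, fun x y hxy hX => ?_⟩
  have := h hxy
  have := hlc hxy
  by_cases hxl : x = l
  · subst hxl
    have := hmax y (mem_filter.2 ⟨mem_Ioo.2 ⟨by have := D.add_two_le hxy; omega, by
      simp only [Crosses] at *; omega⟩, sealed_of_chord hxy⟩)
    simp only [Crosses, id] at *
    omega
  · simp only [Crosses] at *
    omega

theorem HasIndep.union_of_sealed {l c r k m : ℕ} {I J : Finset ℕ} (hl : D.Sealed l c)
    (hr : D.Sealed c r) (hI : D.HasIndep I k) (hJ : D.HasIndep J m) (hIs : I ⊆ Ico l c)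
    (hJs : J ⊆ Ioc c r) (hlr : l ∉ I ∨ r ∉ J) : D.HasIndep (I ∪ J) (k + m) := by
  refine hI.union hJ (fun x hx y hy => ?_) (fun x hx y hy hxy => ?_)
  · have := mem_Ico.1 (hIs hx)
    have := mem_Ioc.1 (hJs hy)
    omega
  · have := mem_Ico.1 (hIs hx)
    have := mem_Ioc.1 (hJs hy)
    obtain ⟨rfl, rfl⟩ : x = l ∧ y = r := by
      have := chord_cases_of_sealed hl hr hxy
      omega
    exact hlr.elim (· hx) (· hy)

theorem HasIndep.union_singleton_of_sealed {l c k : ℕ} {I : Finset ℕ} (hl : D.Sealed l c)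
    (hI : D.HasIndep I k) (hIs : I ⊆ Ioc l c) : D.HasIndep (I ∪ {c + 1}) (k + 2) := by
  refine hI.union (hasIndep_singleton _) (fun x hx y hy => ?_) (fun x hx y hy hxy => ?_)
  · rw [mem_singleton.1 hy]
    exact Nat.lt_succ_of_le (mem_Ioc.1 (hIs hx)).2
  · rw [mem_singleton.1 hy] at hxy
    have := mem_Ioc.1 (hIs hx)
    have := D.add_two_le hxy
    exact hl hxy (Or.inl ⟨by omega, by omega, by omega⟩)

theorem HasIndep.singleton_union_of_sealed {l r k : ℕ} {I : Finset ℕ}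
    (hr : D.Sealed (l + 1) r) (hI : D.HasIndep I k) (hIs : I ⊆ Ico (l + 1) r) :
    D.HasIndep ({l} ∪ I) (2 + k) := by
  refine (hasIndep_singleton _).union hI (fun x hx y hy => ?_) (fun x hx y hy hxy => ?_)
  · rw [mem_singleton.1 hx]
    exact (mem_Ico.1 (hIs hy)).1
  · rw [mem_singleton.1 hx] at hxy
    have := mem_Ico.1 (hIs hy)
    have := D.add_two_le hxy
    exact hr hxy (Or.inr ⟨by omega, by omega, by omega⟩)

theorem IndepBounds.of_apex {l c r : ℕ} (hl : D.Sealed l c) (hr : D.Sealed c r)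
    (hlc : l < c) (hcr : c < r) (Bl : D.IndepBounds l c) (Br : D.IndepBounds c r) :
    D.IndepBounds l r where
  icc := by
    rcases Nat.even_or_odd (r - c) with ⟨j, hj⟩ | ⟨j, hj⟩
    · exact (Bl.ioo.union_of_sealed hl hr (Br.ioc.add_one_of_odd ⟨j, by omega⟩)
        Ioo_subset_Ico_self subset_rfl (by simp)).mono (by grind) (by omega)
    · exact (Bl.ico.union_of_sealed hl hr (Br.ioo.add_one_of_odd ⟨j, by omega⟩)
        subset_rfl Ioo_subset_Ioc_self (by simp)).mono (by grind) (by omega)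
  ico := (Bl.ico.union_of_sealed hl hr Br.ioo subset_rfl Ioo_subset_Ioc_self (by simp)).mono
    (by grind) (by omega)
  ioc := (Bl.ioo.union_of_sealed hl hr Br.ioc Ioo_subset_Ico_self subset_rfl (by simp)).mono
    (by grind) (by omega)
  ioo := (Bl.ioo.union_of_sealed hl hr Br.ioo Ioo_subset_Ico_self Ioo_subset_Ioc_self
    (by simp)).mono (by grind) (by omega)

theorem IndepBounds.extend_right {l c : ℕ} (hl : D.Sealed l c) (hlc : l < c)
    (Bl : D.IndepBounds l c) : D.IndepBounds l (c + 1) where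
  icc := (Bl.ioc.union_singleton_of_sealed hl subset_rfl).mono (by grind) (by omega)
  ico := Bl.icc.mono (by grind) (by omega)
  ioc := (Bl.ioo.union_singleton_of_sealed hl Ioo_subset_Ioc_self).mono (by grind) (by omega)
  ioo := Bl.ioc.mono (by grind) (by omega)

theorem IndepBounds.extend_left {l r : ℕ} (hr : D.Sealed (l + 1) r) (hlr : l + 1 < r)
    (Br : D.IndepBounds (l + 1) r) : D.IndepBounds l r where
  icc := (Br.ico.singleton_union_of_sealed hr subset_rfl).mono (by grind) (by omega)
  ico := (Br.ioo.singleton_union_of_sealed hr Ioo_subset_Ico_self).mono (by grind) (by omega)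
  ioc := Br.icc.mono (by grind) (by omega)
  ioo := Br.ico.mono (by grind) (by omega)

theorem indepBounds_triangle (l : ℕ) : D.IndepBounds l (l + 2) where
  icc := (hasIndep_Ico_two l).mono Ico_subset_Icc_self (by omega)
  ico := (hasIndep_Ico_two l).mono subset_rfl (by omega)
  ioc := (hasIndep_Ico_two (l + 1)).mono (by grind) (by omega)
  ioo := (hasIndep_singleton (l + 1)).mono (by grind) (by omega)

theorem indepBounds_of_sealed {l r : ℕ} (h : D.Sealed l r) (hlr : l + 2 ≤ r) :
    D.IndepBounds l r := by
  obtain ⟨c, hlc, hcr, hl, hr⟩ := exists_apex h hlr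
  rcases Nat.lt_or_ge (l + 1) c with hlc' | hlc' <;>
    rcases Nat.lt_or_ge (c + 1) r with hcr' | hcr'
  · exact .of_apex hl hr hlc hcr (indepBounds_of_sealed hl hlc') (indepBounds_of_sealed hr hcr')
  · obtain rfl : r = c + 1 := by omega
    exact .extend_right hl hlc (indepBounds_of_sealed hl hlc')
  · obtain rfl : c = l + 1 := by omega
    exact .extend_left hr hcr (indepBounds_of_sealed hr hcr')
  · obtain rfl : r = l + 2 := by omega
    exact indepBounds_triangle l
termination_by r - l

theorem exists_isolated_between {a b : ℕ} (h : D.chord a b) :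
    ∃ v, a < v ∧ v < b ∧ D.Isolated v := by
  have := D.add_two_le h
  by_cases hv : D.Isolated (a + 1)
  · exact ⟨a + 1, by omega, by omega, hv⟩
  simp only [Isolated, not_forall] at hv
  obtain ⟨x, y, hxy, hxy'⟩ := hv
  have := D.add_two_le hxy
  have hX := D.not_crosses h hxy
  simp only [Crosses] at hX
  obtain rfl : x = a + 1 := by omega
  obtain ⟨v, hxv, hvy, hv⟩ := exists_isolated_between hxy
  exact ⟨v, by omega, by omega, hv⟩
termination_by b - a

variable (D)

theorem exists_isolated (hn : 0 < n) : ∃ v < n, D.Isolated v := by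
  by_cases h : ∃ a b, D.chord a b
  · obtain ⟨a, b, hab⟩ := h
    obtain ⟨v, -, hvb, hv⟩ := exists_isolated_between hab
    exact ⟨v, hvb.trans (D.lt hab), hv⟩
  · exact ⟨0, hn, fun x y hxy => (h ⟨x, y, hxy⟩).elim⟩

theorem hasIndep_range_of_isolated (hn : 4 ≤ n) (hv : D.Isolated (n - 1)) :
    D.HasIndep (range n) (n + 2) := by
  have hs : D.Sealed 0 (n - 2) := fun x y hxy hX => by
    have := D.lt hxy
    have := hv hxy
    simp only [Crosses] at hX
    omega
  refine ((indepBounds_of_sealed hs (by omega)).icc.union (hasIndep_singleton (n - 1))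
    (fun x hx y hy => ?_) fun x _ y hy hxy => ?_).mono (by grind) (by omega)
  · rw [mem_singleton.1 hy]
    have := (mem_Icc.1 hx).2
    omega
  · exact (hv hxy).2 (mem_singleton.1 hy)

def rotate (k : ℕ) : ChordDiagram n where
  chord a b := a < b ∧ b < n ∧
    (D.chord ((a + k) % n) ((b + k) % n) ∨ D.chord ((b + k) % n) ((a + k) % n))
  add_two_le := by
    rintro a b ⟨hab, hb, h⟩
    have := Nat.add_mod_eq_or_of_lt k hb
    have := Nat.add_mod_eq_or_of_lt k (hab.trans hb)
    have := Nat.mod_lt k (by omega : 0 < n)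
    rcases h with h | h <;> have := chord_bounds h <;> omega
  lt h := h.2.1
  ne_outer := by
    rintro b ⟨hb0, hb, h⟩ hbn
    have := Nat.add_mod_eq_or_of_lt k hb
    have := Nat.add_mod_eq_or_of_lt k (hb0.trans hb)
    have := Nat.mod_lt k (by omega : 0 < n)
    rcases h with h | h <;> have := chord_bounds h <;> omega
  not_crosses := by
    rintro a b c d ⟨hab, hb, h1⟩ ⟨hcd, hd, h2⟩ hX
    have := Nat.add_mod_eq_or_of_lt k hb
    have := Nat.add_mod_eq_or_of_lt k (hab.trans hb)
    have := Nat.add_mod_eq_or_of_lt k hd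
    have := Nat.add_mod_eq_or_of_lt k (hcd.trans hd)
    have := Nat.mod_lt k (by omega : 0 < n)
    simp only [Crosses] at hX
    rcases h1 with h1 | h1 <;> rcases h2 with h2 | h2 <;>
      have := chord_bounds h1 <;> have := chord_bounds h2 <;>
      exact D.not_crosses h1 h2 (by simp only [Crosses]; omega)

variable {D}

theorem Isolated.rotate {v : ℕ} (h : D.Isolated v) (hv : v < n) :
    (D.rotate (v + 1)).Isolated (n - 1) := by
  rintro x y ⟨hxy, hy, hc⟩
  refine ⟨by omega, fun hyn => ?_⟩
  have hv' : (y + (v + 1)) % n = v := by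
    rw [hyn, show n - 1 + (v + 1) = v + n by omega, Nat.add_mod_right, Nat.mod_eq_of_lt hv]
  rw [hv'] at hc
  rcases hc with hc | hc
  · exact (h hc).2 rfl
  · exact (h hc).1 rfl

theorem HasIndep.of_rotate {k m : ℕ} (h : (D.rotate k).HasIndep (range n) m) :
    D.HasIndep (range n) m := by
  obtain ⟨S, hS, hind, hm⟩ := h
  have hlt : ∀ a ∈ S, a < n := fun a ha => mem_range.1 (hS ha)
  have hinj : Set.InjOn (fun a => (a + k) % n) S := fun a ha b hb hab => by
    have := Nat.add_mod_eq_or_of_lt k (hlt a ha)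
    have := Nat.add_mod_eq_or_of_lt k (hlt b hb)
    have := hlt a ha
    have := hlt b hb
    simp only at hab
    omega
  refine ⟨S.image (fun a => (a + k) % n), fun x hx => ?_, ?_, by rwa [card_image_of_injOn hinj]⟩
  · obtain ⟨a, ha, rfl⟩ := mem_image.1 hx
    exact mem_range.2 (Nat.mod_lt _ (by have := hlt a ha; omega))
  · simp only [IsIndep, mem_image]
    rintro _ ⟨a, ha, rfl⟩ _ ⟨b, hb, rfl⟩ hab
    rcases lt_trichotomy a b with h | rfl | h
    · exact hind a ha b hb ⟨h, hlt b hb, Or.inl hab⟩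
    · have := D.add_two_le hab
      omega
    · exact hind b hb a ha ⟨h, hlt a ha, Or.inr hab⟩

variable (D)

theorem hasIndep_range (hn : 4 ≤ n) : D.HasIndep (range n) (n + 2) := by
  obtain ⟨v, hv, hiso⟩ := D.exists_isolated (by omega)
  exact ((D.rotate (v + 1)).hasIndep_range_of_isolated hn (hiso.rotate hv)).of_rotate

end ChordDiagram

def MaxOuterplanar.toChordDiagram {n : ℕ} (M : MaxOuterplanar n) : ChordDiagram n where
  chord a b := ∃ (ha : a < n) (hb : b < n), M.chord ⟨a, ha⟩ ⟨b, hb⟩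
  add_two_le := by
    rintro a b ⟨ha, hb, h⟩
    have hab : a < b := M.lt_of_chord _ _ h
    by_contra hb'
    refine M.not_poly _ _ h (Or.inl ?_)
    change (a + 1) % n = b
    rw [Nat.mod_eq_of_lt (by omega)]
    omega
  lt := fun ⟨_, hb, _⟩ => hb
  ne_outer := by
    rintro b ⟨ha, hb, h⟩ hbn
    refine M.not_poly _ _ h (Or.inr ?_)
    change (b + 1) % n = 0
    rw [hbn, Nat.mod_self]
  not_crosses := by
    rintro a b c d ⟨_, _, h1⟩ ⟨_, _, h2⟩ hX
    exact M.noncross _ _ _ _ h1 h2 hX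

/-- The chord graph `G'` of an edge-maximal outerplane graph on `n ≥ 4` vertices
has an independent set of size at least `n / 2 + 1`. -/
theorem stmt_11 (n : ℕ) (hn : 4 ≤ n) (M : MaxOuterplanar n) :
    ∃ S : Finset (Fin n),
      (∀ a ∈ S, ∀ b ∈ S, ¬ M.chord a b) ∧ n + 2 ≤ 2 * S.card := by
  obtain ⟨S, hS, hind, hcard⟩ := M.toChordDiagram.hasIndep_range hn
  have hlt : ∀ m ∈ S, m < n := fun m hm => mem_range.1 (hS hm)
  refine ⟨S.attachFin hlt, fun a ha b hb hab => ?_, by rwa [card_attachFin]⟩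
  exact hind a ((mem_attachFin hlt).1 ha) b ((mem_attachFin hlt).1 hb) ⟨a.isLt, b.isLt, hab⟩
end

section
/- Let G1 and G2 be planar graphs on the same vertex set V, and let S ⊆ V be an unordered free set in both G1 and G2. Then G1 and G2 have an |S|-partial simultaneous geometric embedding with mapping: there exist points p_1,...,p_s and vertices v_1,...,v_s in S such that each of G1, G2 has a straight-line crossing-free drawing with v_i at p_i for all i. -/
lemma IsCFDrawing.comp_affineEquiv {V : Type*} {G : SimpleGraph V} {p : V → ℝ × ℝ}
    (h : IsCFDrawing G p) (f : (ℝ × ℝ) ≃ᵃ[ℝ] (ℝ × ℝ)) : IsCFDrawing G (f ∘ p) := by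
  obtain ⟨hinj, hvertex, hedge⟩ := h
  have hseg (x y : ℝ × ℝ) : segment ℝ (f x) (f y) = f '' segment ℝ x y :=
    (image_segment ℝ f.toAffineMap x y).symm
  have hopen (x y : ℝ × ℝ) : openSegment ℝ (f x) (f y) = f '' openSegment ℝ x y :=
    (image_openSegment ℝ f.toAffineMap x y).symm
  refine ⟨f.injective.comp hinj, fun u v w huv hwu hwv hw => ?_, fun a b c d hab hcd hne => ?_⟩
  · simp only [Function.comp_apply, hopen, f.injective.mem_set_image] at hw
    exact hvertex u v w huv hwu hwv hw
  · simp only [Function.comp_apply, hseg, ← Set.image_inter f.injective]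
    exact (Set.image_mono (hedge a b c d hab hcd hne)).trans (Set.image_image f p _).subset

lemma IsCFDrawing.prodSwap {V : Type*} {G : SimpleGraph V} {p : V → ℝ × ℝ}
    (h : IsCFDrawing G p) : IsCFDrawing G (Prod.swap ∘ p) :=
  h.comp_affineEquiv (LinearEquiv.prodComm ℝ ℝ ℝ).toAffineEquiv

lemma IsFreeSet.exists_rank {V : Type*} {G : SimpleGraph V} {S : Finset V}
    (h : IsFreeSet G S) : ∃ rank : S ≃ Fin S.card, ∀ y : S → ℝ,
      ∃ p : V → ℝ × ℝ, IsCFDrawing G p ∧ ∀ w : S, p w = ((rank w : ℝ), y w) := by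
  obtain ⟨v, hinj, hmem, hfree⟩ := h
  have hbij : Function.Bijective (fun i => (⟨v i, hmem i⟩ : S)) :=
    (Fintype.bijective_iff_injective_and_card _).2
      ⟨fun i j hij => hinj (congrArg Subtype.val hij), by simp⟩
  set e := Equiv.ofBijective _ hbij
  refine ⟨e.symm, fun y => ?_⟩
  obtain ⟨p, hp, hpv⟩ := hfree (fun i => (i : ℝ)) (fun i => y (e i))
    (Nat.strictMono_cast.comp Fin.val_strictMono)
  refine ⟨p, hp, fun w => ?_⟩
  have hw : v (e.symm w) = w := congrArg Subtype.val (e.apply_symm_apply w)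
  simpa [hw] using hpv (e.symm w)

theorem stmt_14_general {V : Type*} (G1 G2 : SimpleGraph V) (S : Finset V)
    (h1 : IsFreeSet G1 S) (h2 : IsFreeSet G2 S) :
    ∃ pt : V → ℝ × ℝ,
      (∃ p1 : V → ℝ × ℝ, IsCFDrawing G1 p1 ∧ ∀ v ∈ S, p1 v = pt v) ∧
      (∃ p2 : V → ℝ × ℝ, IsCFDrawing G2 p2 ∧ ∀ v ∈ S, p2 v = pt v) := by
  obtain ⟨rank1, hrank1⟩ := h1.exists_rank
  obtain ⟨rank2, hrank2⟩ := h2.exists_rank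
  obtain ⟨p1, hp1, hp1S⟩ := hrank1 fun w => (rank2 w : ℝ)
  obtain ⟨q2, hq2, hq2S⟩ := hrank2 fun w => (rank1 w : ℝ)
  refine ⟨p1, ⟨p1, hp1, fun _ _ => rfl⟩, Prod.swap ∘ q2, hq2.prodSwap, fun v hv => ?_⟩
  simp [hp1S ⟨v, hv⟩, hq2S ⟨v, hv⟩]

theorem stmt_14 {V : Type*} [Fintype V] (G1 G2 : SimpleGraph V) (S : Finset V)
    (h1 : IsFreeSet G1 S) (h2 : IsFreeSet G2 S) :
    ∃ pt : V → ℝ × ℝ,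
      (∃ p1 : V → ℝ × ℝ, IsCFDrawing G1 p1 ∧ ∀ v ∈ S, p1 v = pt v) ∧
      (∃ p2 : V → ℝ × ℝ, IsCFDrawing G2 p2 ∧ ∀ v ∈ S, p2 v = pt v) :=
  stmt_14_general G1 G2 S h1 h2
end

section
/- Let Q = {G_1,...,G_r} (r ≥ 2) be planar graphs on the same vertex set V, and suppose S ⊆ V is an unordered free set in each G_i. Then the graphs in Q have a k-partial simultaneous geometric embedding with mapping for k = ⌈|S|^{1/2^{(r-2)}}⌉: there exist k vertices and k points such that every G_i has a straight-line crossing-free drawing placing those vertices at those points. -/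
set_option linter.unusedSectionVars false

lemma cf_map {V : Type*} (G : SimpleGraph V) (p : V → ℝ × ℝ)
    (e : (ℝ × ℝ) ≃ₗ[ℝ] ℝ × ℝ) (h : IsCFDrawing G p) : IsCFDrawing G (fun v => e (p v)) := by
  obtain ⟨hinj, hop, hseg⟩ := h
  have him : ∀ a b : ℝ × ℝ, segment ℝ (e a) (e b) = e '' segment ℝ a b := by
    intro a b
    exact (image_segment ℝ (e.toLinearMap.toAffineMap) a b).symm
  have himo : ∀ a b : ℝ × ℝ, openSegment ℝ (e a) (e b) = e '' openSegment ℝ a b := by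
    intro a b
    exact (image_openSegment ℝ (e.toLinearMap.toAffineMap) a b).symm
  refine ⟨fun a b hab => hinj (e.injective hab), ?_, ?_⟩
  · intro u v w huv hwu hwv hmem
    rw [himo] at hmem
    obtain ⟨z, hz, hze⟩ := hmem
    exact hop u v w huv hwu hwv (e.injective hze ▸ hz)
  · intro a b c d hab hcd hne
    rw [him, him, ← Set.image_inter e.injective]
    intro z hz
    obtain ⟨w, hw, hwe⟩ := hz
    obtain ⟨u, hu, hue⟩ := hseg a b c d hab hcd hne hw
    exact ⟨u, hu, by simp only [hue, hwe]⟩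

/-- master placement lemma -/
lemma free_place {V : Type*} {G : SimpleGraph V} {s : ℕ} {v : Fin s → V}
    (h : IsFreeSeq G v) (e : (ℝ × ℝ) ≃ₗ[ℝ] ℝ × ℝ) (x y : Fin s → ℝ)
    (hx : StrictMono (fun i => (e.symm (x i, y i)).1)) :
    ∃ p : V → ℝ × ℝ, IsCFDrawing G p ∧ ∀ i, p (v i) = (x i, y i) := by
  obtain ⟨p, hp, hpv⟩ := h (fun i => (e.symm (x i, y i)).1) (fun i => (e.symm (x i, y i)).2) hx
  refine ⟨fun w => e (p w), cf_map G p e hp, fun i => ?_⟩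
  show e (p (v i)) = _
  rw [hpv i]
  simp

noncomputable def negFst : (ℝ × ℝ) ≃ₗ[ℝ] ℝ × ℝ := (LinearEquiv.neg ℝ).prodCongr (LinearEquiv.refl ℝ ℝ)

lemma free_place_anti {V : Type*} {G : SimpleGraph V} {s : ℕ} {v : Fin s → V}
    (h : IsFreeSeq G v) (x y : Fin s → ℝ) (hx : StrictAnti x) :
    ∃ p : V → ℝ × ℝ, IsCFDrawing G p ∧ ∀ i, p (v i) = (x i, y i) := by
  refine free_place h negFst x y ?_
  have : ∀ i, (negFst.symm (x i, y i)).1 = -(x i) := fun i => rfl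
  simp only [this]
  exact hx.neg

lemma free_place_ymono {V : Type*} {G : SimpleGraph V} {s : ℕ} {v : Fin s → V}
    (h : IsFreeSeq G v) (x y : Fin s → ℝ) (hy : StrictMono y) :
    ∃ p : V → ℝ × ℝ, IsCFDrawing G p ∧ ∀ i, p (v i) = (x i, y i) := by
  refine free_place h (LinearEquiv.prodComm ℝ ℝ ℝ) x y ?_
  exact hy

def AlignedOn {V : Type*} (a b : V → ℕ) (U : Finset V) : Prop :=
  (∀ v ∈ U, ∀ w ∈ U, a v < a w → b v < b w) ∨ (∀ v ∈ U, ∀ w ∈ U, a v < a w → b w < b v)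

lemma alignedOn_mono {V : Type*} {a b : V → ℕ} {U W : Finset V} (h : AlignedOn a b U)
    (hw : W ⊆ U) : AlignedOn a b W := by
  rcases h with h | h
  · exact Or.inl fun v hv w hww hlt => h v (hw hv) w (hw hww) hlt
  · exact Or.inr fun v hv w hww hlt => h v (hw hv) w (hw hww) hlt

/-- longest increasing chains: a function `f` measuring longest (a,b)-increasing chain in `T`
ending at `t`. -/
lemma chain_exists {V : Type*} [DecidableEq V] (a b : V → ℕ) (T : Finset V)
    (ha : Set.InjOn a T) :
    ∃ f : V → ℕ,
      (∀ t ∈ T, 1 ≤ f t) ∧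
      (∀ t ∈ T, ∀ u ∈ T, a t < a u → b t < b u → f t < f u) ∧
      (∀ t ∈ T, ∃ C ⊆ T, C.card = f t ∧ ∀ v ∈ C, ∀ w ∈ C, a v < a w → b v < b w) := by
  classical
  set P : V → Finset V → Prop := fun t C =>
    C ⊆ T ∧ t ∈ C ∧ (∀ w ∈ C, a w ≤ a t) ∧ ∀ v ∈ C, ∀ w ∈ C, a v < a w → b v < b w with hP
  set f : V → ℕ := fun t => (T.powerset.filter (fun C => P t C)).sup Finset.card with hf
  have hsingle : ∀ t ∈ T, ({t} : Finset V) ∈ T.powerset.filter (fun C => P t C) := by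
    intro t ht
    simp only [Finset.mem_filter, Finset.mem_powerset, hP]
    refine ⟨by simpa using ht, by simpa using ht, Finset.mem_singleton_self t, ?_, ?_⟩
    · intro w hw; rw [Finset.mem_singleton] at hw; subst hw; exact le_refl _
    · intro x hx w hw; rw [Finset.mem_singleton] at hx hw; subst hx; subst hw; omega
  refine ⟨f, ?_, ?_, ?_⟩
  · intro t ht
    have h1 : ({t} : Finset V).card ≤ f t := Finset.le_sup (hsingle t ht)
    simpa using h1
  · intro t ht u hu hat hbt
    -- take a witness chain for t
    have hne : (T.powerset.filter (fun C => P t C)).Nonempty := ⟨_, hsingle t ht⟩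
    obtain ⟨C, hCmem, hCeq⟩ := Finset.exists_mem_eq_sup _ hne Finset.card
    rw [Finset.mem_filter, Finset.mem_powerset] at hCmem
    obtain ⟨hCT, hCsub, htC, hCa, hCchain⟩ := hCmem
    have huC : u ∉ C := fun h => absurd (hCa u h) (by omega)
    have hmem : insert u C ∈ T.powerset.filter (fun C => P u C) := by
      rw [Finset.mem_filter, Finset.mem_powerset]
      refine ⟨Finset.insert_subset hu hCT, Finset.insert_subset hu hCT,
        Finset.mem_insert_self u C, ?_, ?_⟩
      · intro w hw
        rcases Finset.mem_insert.mp hw with rfl | hw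
        · exact le_refl _
        · exact le_trans (hCa w hw) (by omega)
      · intro x hx w hw hxw
        rcases Finset.mem_insert.mp hx with hxu | hxC
        · subst hxu
          rcases Finset.mem_insert.mp hw with hwu | hwC
          · subst hwu; omega
          · exact absurd (le_trans (hCa w hwC) (le_of_lt hat)) (by omega)
        · rcases Finset.mem_insert.mp hw with hwu | hwC
          · subst hwu
            rcases eq_or_lt_of_le (hCa x hxC) with heq | hlt
            · have hxt : x = t := ha (hCT hxC) ht heq
              subst hxt; exact hbt
            · exact lt_trans (hCchain x hxC t htC hlt) hbt
          · exact hCchain x hxC w hwC hxw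
    have := Finset.le_sup (f := Finset.card) hmem
    have hcard : (insert u C).card = C.card + 1 := Finset.card_insert_of_notMem huC
    calc f t = C.card := hCeq
    _ < (insert u C).card := by omega
    _ ≤ f u := this
  · intro t ht
    have hne : (T.powerset.filter (fun C => P t C)).Nonempty := ⟨_, hsingle t ht⟩
    obtain ⟨C, hCmem, hCeq⟩ := Finset.exists_mem_eq_sup _ hne Finset.card
    rw [Finset.mem_filter, Finset.mem_powerset] at hCmem
    exact ⟨C, hCmem.1, hCeq.symm, hCmem.2.2.2.2⟩

lemma es_core {V : Type*} [DecidableEq V] (a b : V → ℕ) (T : Finset V)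
    (ha : Set.InjOn a T) (hb : Set.InjOn b T) :
    ∃ U ⊆ T, T.card ≤ U.card * U.card ∧ AlignedOn a b U := by
  classical
  rcases T.eq_empty_or_nonempty with rfl | hTne
  · exact ⟨∅, Finset.Subset.refl _, by simp, Or.inl (by simp)⟩
  set K := T.sup b with hK
  have hbK : ∀ w ∈ T, b w ≤ K := fun w hw => Finset.le_sup hw
  set b' : V → ℕ := fun w => K - b w with hb'
  have hb'lt : ∀ v ∈ T, ∀ w ∈ T, (b w < b v ↔ b' v < b' w) := by
    intro v hv w hw
    have h1 := hbK v hv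
    have h2 := hbK w hw
    constructor <;> intro h <;> simp only [hb'] at * <;> omega
  have hb'inj : Set.InjOn b' T := by
    intro v hv w hw h
    apply hb hv hw
    have := hbK v hv; have := hbK w hw
    simp only [hb'] at h; omega
  obtain ⟨f, hf1, hfstep, hfwit⟩ := chain_exists a b T ha
  obtain ⟨g, hg1, hgstep, hgwit⟩ := chain_exists a b' T ha
  -- (f,g) is injective on T
  have hinj : Set.InjOn (fun t => (f t, g t)) T := by
    intro t ht u hu heq
    by_contra hne
    simp only [Prod.mk.injEq] at heq
    have hane : a t ≠ a u := fun h => hne (ha ht hu h)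
    have hbne : b t ≠ b u := fun h => hne (hb ht hu h)
    rcases lt_or_gt_of_ne hane with h | h
    · rcases lt_or_gt_of_ne hbne with h2 | h2
      · exact absurd heq.1 (Nat.ne_of_lt (hfstep t ht u hu h h2))
      · have : b' t < b' u := (hb'lt t ht u hu).mp h2
        exact absurd heq.2 (Nat.ne_of_lt (hgstep t ht u hu h this))
    · rcases lt_or_gt_of_ne hbne with h2 | h2
      · have : b' u < b' t := (hb'lt u hu t ht).mp h2
        exact absurd heq.2 (Nat.ne_of_lt' (hgstep u hu t ht h this))
      · exact absurd heq.1 (Nat.ne_of_lt' (hfstep u hu t ht h h2))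
  set I := T.sup f with hI
  set D := T.sup g with hD
  have hcard : T.card ≤ I * D := by
    have h1 : T.image (fun t => (f t, g t)) ⊆ Finset.Icc 1 I ×ˢ Finset.Icc 1 D := by
      intro x hx
      rw [Finset.mem_image] at hx
      obtain ⟨t, ht, rfl⟩ := hx
      rw [Finset.mem_product, Finset.mem_Icc, Finset.mem_Icc]
      exact ⟨⟨hf1 t ht, Finset.le_sup ht⟩, ⟨hg1 t ht, Finset.le_sup ht⟩⟩
    calc T.card = (T.image (fun t => (f t, g t))).card :=
          (Finset.card_image_of_injOn hinj).symm
    _ ≤ (Finset.Icc 1 I ×ˢ Finset.Icc 1 D).card := Finset.card_le_card h1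
    _ = I * D := by rw [Finset.card_product, Nat.card_Icc, Nat.card_Icc]; simp
  rcases le_total I D with hID | hID
  · -- use a long decreasing chain (witness for g)
    obtain ⟨t, ht, hteq⟩ := Finset.exists_mem_eq_sup T hTne g
    obtain ⟨C, hCT, hCcard, hCchain⟩ := hgwit t ht
    refine ⟨C, hCT, ?_, Or.inr ?_⟩
    · have : C.card = D := by rw [hCcard, ← hteq]
      calc T.card ≤ I * D := hcard
      _ ≤ D * D := Nat.mul_le_mul_right _ hID
      _ = C.card * C.card := by rw [this]
    · intro x hx w hw hxw
      exact (hb'lt x (hCT hx) w (hCT hw)).mpr (hCchain x hx w hw hxw)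
  · obtain ⟨t, ht, hteq⟩ := Finset.exists_mem_eq_sup T hTne f
    obtain ⟨C, hCT, hCcard, hCchain⟩ := hfwit t ht
    refine ⟨C, hCT, ?_, Or.inl hCchain⟩
    have : C.card = I := by rw [hCcard, ← hteq]
    calc T.card ≤ I * D := hcard
    _ ≤ I * I := Nat.mul_le_mul_left _ hID
    _ = C.card * C.card := by rw [this]

lemma align_iter {V : Type*} [DecidableEq V] (a : V → ℕ) (T : Finset V)
    (ha : Set.InjOn a T) :
    ∀ (k : ℕ) (b : ℕ → V → ℕ), (∀ i, i < k → Set.InjOn (b i) T) →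
    ∃ U ⊆ T, T.card ≤ U.card ^ (2 ^ k) ∧ ∀ i < k, AlignedOn a (b i) U := by
  intro k
  induction k with
  | zero => exact fun b _ => ⟨T, Finset.Subset.refl _, by simp, by omega⟩
  | succ k ih =>
    intro b hb
    obtain ⟨U, hUT, hUcard, hUalign⟩ := ih b (fun i hi => hb i (by omega))
    obtain ⟨W, hWU, hWcard, hWalign⟩ :=
      es_core a (b k) U (ha.mono (Finset.coe_subset.mpr hUT))
        ((hb k (by omega)).mono (Finset.coe_subset.mpr hUT))
    refine ⟨W, hWU.trans hUT, ?_, ?_⟩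
    · calc T.card ≤ U.card ^ 2 ^ k := hUcard
      _ ≤ (W.card * W.card) ^ 2 ^ k := Nat.pow_le_pow_left hWcard _
      _ = W.card ^ 2 ^ (k + 1) := by rw [← pow_two, ← pow_mul, pow_succ, Nat.mul_comm]
    · intro i hi
      rcases Nat.lt_succ_iff_lt_or_eq.mp hi with hi | rfl
      · exact alignedOn_mono (hUalign i hi) hWU
      · exact hWalign

section aux
variable {V : Type*} [DecidableEq V]

lemma Znat_strictMono {n : ℕ} (v : Fin n → V) (T : Finset V) :
    StrictMono (fun j : Fin n =>
      (n + 1) * (Finset.univ.filter (fun l => l ≤ j ∧ v l ∈ T)).card +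
        (if v j ∈ T then 0 else j.val)) := by
  intro j j' hjj'
  simp only
  set Cj := (Finset.univ.filter (fun l => l ≤ j ∧ v l ∈ T)) with hCj
  set Cj' := (Finset.univ.filter (fun l => l ≤ j' ∧ v l ∈ T)) with hCj'
  have hsub : Cj ⊆ Cj' := by
    intro l hl
    simp only [hCj, hCj', Finset.mem_filter, Finset.mem_univ, true_and] at *
    exact ⟨le_trans hl.1 (le_of_lt hjj'), hl.2⟩
  have hle : Cj.card ≤ Cj'.card := Finset.card_le_card hsub
  have hA : (n + 1) * Cj.card ≤ (n + 1) * Cj'.card := Nat.mul_le_mul_left _ hle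
  have hfj : (if v j ∈ T then 0 else j.val) ≤ j.val := by split <;> omega
  have hjn : j.val < n := j.isLt
  by_cases hT : v j' ∈ T
  · have hnotmem : j' ∉ Cj := by
      simp only [hCj, Finset.mem_filter, Finset.mem_univ, true_and, not_and]
      intro h; exact absurd (lt_of_le_of_lt h hjj') (lt_irrefl _)
    have hins : insert j' Cj ⊆ Cj' := by
      apply Finset.insert_subset _ hsub
      simp only [hCj', Finset.mem_filter, Finset.mem_univ, true_and]
      exact ⟨le_refl _, hT⟩
    have h2 : Cj.card + 1 ≤ Cj'.card := by
      have := Finset.card_le_card hins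
      rwa [Finset.card_insert_of_notMem hnotmem] at this
    have hB : (n + 1) * (Cj.card + 1) ≤ (n + 1) * Cj'.card := Nat.mul_le_mul_left _ h2
    rw [Nat.mul_succ] at hB
    simp only [if_pos hT]
    omega
  · simp only [if_neg hT]
    have hjj : j.val < j'.val := hjj'
    omega

lemma cnt_eq_rank {n : ℕ} {v : Fin n → V} (hv : Function.Injective v) {T : Finset V}
    (hsurj : ∀ w ∈ T, ∃ l, v l = w) (ρ : V → ℕ) (hρ : ∀ j, ρ (v j) = j.val)
    (j : Fin n) :
    (Finset.univ.filter (fun l => l ≤ j ∧ v l ∈ T)).card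
      = (T.filter (fun u => ρ u ≤ ρ (v j))).card := by
  apply Finset.card_bij (fun l _ => v l)
  · intro l hl
    simp only [Finset.mem_filter, Finset.mem_univ, true_and] at hl
    rw [Finset.mem_filter]
    refine ⟨hl.2, ?_⟩
    rw [hρ, hρ]
    exact hl.1
  · intro l1 _ l2 _ heq
    exact hv heq
  · intro u hu
    rw [Finset.mem_filter] at hu
    obtain ⟨l, hl⟩ := hsurj u hu.1
    refine ⟨l, ?_, hl⟩
    simp only [Finset.mem_filter, Finset.mem_univ, true_and]
    refine ⟨?_, by rw [hl]; exact hu.1⟩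
    have h2 := hu.2
    rw [← hl, hρ, hρ] at h2
    exact h2

lemma rank_transfer {ρ0 ρi : V → ℕ} {T : Finset V} (h0 : Set.InjOn ρ0 T)
    (hmono : ∀ x ∈ T, ∀ w ∈ T, ρ0 x < ρ0 w → ρi x < ρi w) (w : V) (hw : w ∈ T) :
    T.filter (fun u => ρi u ≤ ρi w) = T.filter (fun u => ρ0 u ≤ ρ0 w) := by
  ext u
  simp only [Finset.mem_filter, and_congr_right_iff]
  intro hu
  constructor
  · intro h
    by_contra hc
    push_neg at hc
    exact absurd h (not_le.mpr (hmono w hw u hu hc))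
  · intro h
    rcases lt_or_eq_of_le h with h | h
    · exact le_of_lt (hmono u hu w hw h)
    · rw [h0 hu hw h]

lemma rank_transfer_anti {ρ0 ρi : V → ℕ} {T : Finset V} (h0 : Set.InjOn ρ0 T)
    (hanti : ∀ x ∈ T, ∀ w ∈ T, ρ0 x < ρ0 w → ρi w < ρi x) (w : V) (hw : w ∈ T) :
    T.filter (fun u => ρi u ≤ ρi w) = T.filter (fun u => ρ0 w ≤ ρ0 u) := by
  ext u
  simp only [Finset.mem_filter, and_congr_right_iff]
  intro hu
  constructor
  · intro h
    by_contra hc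
    push_neg at hc
    exact absurd h (not_le.mpr (hanti u hu w hw hc))
  · intro h
    rcases lt_or_eq_of_le h with h | h
    · exact le_of_lt (hanti w hw u hu h)
    · rw [← h0 hw hu h]

lemma anti_card {ρ0 : V → ℕ} {T : Finset V} (h0 : Set.InjOn ρ0 T) (w : V) (hw : w ∈ T) :
    (T.filter (fun u => ρ0 w ≤ ρ0 u)).card + (T.filter (fun u => ρ0 u ≤ ρ0 w)).card
      = T.card + 1 := by
  have hunion : T.filter (fun u => ρ0 w ≤ ρ0 u) ∪ T.filter (fun u => ρ0 u ≤ ρ0 w) = T := by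
    rw [← Finset.filter_or]
    apply Finset.filter_true_of_mem
    intro u _
    omega
  have hinter : T.filter (fun u => ρ0 w ≤ ρ0 u) ∩ T.filter (fun u => ρ0 u ≤ ρ0 w) = {w} := by
    rw [← Finset.filter_and]
    ext u
    simp only [Finset.mem_filter, Finset.mem_singleton]
    constructor
    · rintro ⟨hu, h1, h2⟩
      exact h0 hu hw (le_antisymm h2 h1)
    · rintro rfl
      exact ⟨hw, le_refl _, le_refl _⟩
  have := Finset.card_union_add_card_inter (T.filter (fun u => ρ0 w ≤ ρ0 u))
    (T.filter (fun u => ρ0 u ≤ ρ0 w))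
  rw [hunion, hinter] at this
  simp only [Finset.card_singleton] at this
  omega

end aux

theorem stmt_16 {V : Type*} [Fintype V] (r : ℕ) (hr : 2 ≤ r)
    (G : Fin r → SimpleGraph V) (S : Finset V)
    (hfree : ∀ i, IsFreeSet (G i) S) :
    ∃ T : Finset V, T ⊆ S ∧
      ⌈(S.card : ℝ) ^ (((2 : ℝ) ^ (r - 2))⁻¹)⌉₊ ≤ T.card ∧
      ∃ pt : V → ℝ × ℝ, ∀ i, ∃ p : V → ℝ × ℝ,
        IsCFDrawing (G i) p ∧ ∀ v ∈ T, p v = pt v := by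
  classical
  choose v hvinj hvS hvfree using hfree
  by_cases hn0 : S.card = 0
  · refine ⟨∅, Finset.empty_subset _, ?_, fun _ => (0, 0), fun i => ?_⟩
    · have h2 : ((2 : ℝ) ^ (r - 2))⁻¹ ≠ 0 := by positivity
      rw [hn0]
      rw [Nat.cast_zero, Real.zero_rpow h2]
      simp
    · obtain ⟨p, hp, -⟩ := hvfree i (fun _ => 0) (fun _ => 0)
        (fun a _ _ => absurd a.isLt (by omega))
      exact ⟨p, hp, fun w hw => absurd hw (Finset.notMem_empty w)⟩
  -- surjectivity of enumerations onto S
  have hsurj : ∀ (i : Fin r), ∀ w ∈ S, ∃ j, v i j = w := by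
    intro i w hw
    have himg : Finset.image (v i) Finset.univ = S := by
      apply Finset.eq_of_subset_of_card_le
      · intro x hx
        rw [Finset.mem_image] at hx
        obtain ⟨j, -, rfl⟩ := hx
        exact hvS i j
      · rw [Finset.card_image_of_injective _ (hvinj i), Finset.card_univ, Fintype.card_fin]
    rw [← himg, Finset.mem_image] at hw
    obtain ⟨j, -, hj⟩ := hw
    exact ⟨j, hj⟩
  -- position functions
  set ρ : Fin r → V → ℕ := fun i w =>
    if h : ∃ j, v i j = w then (Classical.choose h : Fin S.card).val else 0 with hρdef
  have hρv : ∀ i j, ρ i (v i j) = j.val := by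
    intro i j
    have h : ∃ j', v i j' = v i j := ⟨j, rfl⟩
    simp only [hρdef, dif_pos h]
    have hcj : Classical.choose h = j := hvinj i (Classical.choose_spec h)
    rw [hcj]
  have hρinj : ∀ i, Set.InjOn (ρ i) S := by
    intro i u hu w hw heq
    obtain ⟨ju, hju⟩ := hsurj i u hu
    obtain ⟨jw, hjw⟩ := hsurj i w hw
    rw [← hju, ← hjw, hρv, hρv] at heq
    rw [← hju, ← hjw, Fin.val_injective heq]
  have h0r : 0 < r := by omega
  set i0 : Fin r := ⟨0, h0r⟩ with hi0
  set ilast : Fin r := ⟨r - 1, by omega⟩ with hilast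
  -- Erdős–Szekeres alignment
  obtain ⟨T, hTS, hTcard, hTalign⟩ := align_iter (ρ i0) S (hρinj i0) (r - 2)
    (fun m => ρ (if h : m + 1 < r then ⟨m + 1, h⟩ else i0))
    (fun m _ => by split <;> exact hρinj _)
  have halign : ∀ i : Fin r, i.val < r - 1 → AlignedOn (ρ i0) (ρ i) T := by
    intro i hi
    rcases Nat.eq_zero_or_pos i.val with h | h
    · left
      intro a _ b _ hab
      have hii : i = i0 := Fin.ext (by simpa [hi0] using h)
      rw [hii]
      exact hab
    · have hm : i.val - 1 < r - 2 := by omega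
      have halt := hTalign (i.val - 1) hm
      have hidx : (if h : (i.val - 1) + 1 < r then (⟨(i.val - 1) + 1, h⟩ : Fin r) else i0) = i := by
        rw [dif_pos (by omega)]
        exact Fin.ext (by simp; omega)
      rwa [hidx] at halt
  -- cardinality bound
  have hceil : ⌈(S.card : ℝ) ^ (((2 : ℝ) ^ (r - 2))⁻¹)⌉₊ ≤ T.card := by
    rw [Nat.ceil_le]
    have h1 : (S.card : ℝ) ≤ (T.card : ℝ) ^ (2 ^ (r - 2) : ℕ) := by exact_mod_cast hTcard
    have h2 : ((T.card : ℝ) ^ (2 ^ (r - 2) : ℕ)) ^ (((2 : ℝ) ^ (r - 2))⁻¹) = (T.card : ℝ) := by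
      rw [← Real.rpow_natCast (T.card : ℝ) (2 ^ (r - 2)), ← Real.rpow_mul (Nat.cast_nonneg _)]
      have h3 : ((2 ^ (r - 2) : ℕ) : ℝ) = (2 : ℝ) ^ (r - 2) := by push_cast; ring
      rw [h3, mul_inv_cancel₀ (by positivity), Real.rpow_one]
    calc (S.card : ℝ) ^ (((2 : ℝ) ^ (r - 2))⁻¹)
        ≤ ((T.card : ℝ) ^ (2 ^ (r - 2) : ℕ)) ^ (((2 : ℝ) ^ (r - 2))⁻¹) :=
          Real.rpow_le_rpow (Nat.cast_nonneg _) h1 (by positivity)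
      _ = (T.card : ℝ) := h2
  -- the point assignment
  set Rk : V → ℕ := fun w => (T.filter (fun u => ρ i0 u ≤ ρ i0 w)).card with hRk
  set Rk' : V → ℕ := fun w => (T.filter (fun u => ρ ilast u ≤ ρ ilast w)).card with hRk'
  refine ⟨T, hTS, hceil, fun w => ((((S.card + 1) * Rk w : ℕ) : ℝ), (((S.card + 1) * Rk' w : ℕ) : ℝ)),
    fun i => ?_⟩
  -- counting functions for graph i
  set cntf : Fin S.card → ℕ := fun j => (Finset.univ.filter (fun l => l ≤ j ∧ v i l ∈ T)).card
    with hcntf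
  set Z : Fin S.card → ℕ := fun j => (S.card + 1) * cntf j + (if v i j ∈ T then 0 else j.val) with hZ
  have hZmono : StrictMono Z := Znat_strictMono (v i) T
  have hsurjT : ∀ w ∈ T, ∃ l, v i l = w := fun w hw => hsurj i w (hTS hw)
  have hcnt_at : ∀ j : Fin S.card, cntf j = (T.filter (fun u => ρ i u ≤ ρ i (v i j))).card :=
    fun j => cnt_eq_rank (hvinj i) hsurjT (ρ i) (hρv i) j
  have hρinjT : ∀ i' : Fin r, Set.InjOn (ρ i') T :=
    fun i' => (hρinj i').mono (Finset.coe_subset.mpr hTS)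
  by_cases hlasti : i = ilast
  · -- last graph: use y-coordinate
    obtain ⟨p, hp, hpv⟩ := free_place_ymono (hvfree i)
      (x := fun j => if v i j ∈ T then (((S.card + 1) * Rk (v i j) : ℕ) : ℝ) else 0)
      (y := fun j => (Z j : ℝ))
      (fun a b hab => by dsimp only; exact_mod_cast hZmono hab)
    refine ⟨p, hp, fun w hw => ?_⟩
    obtain ⟨j, hj⟩ := hsurjT w hw
    have hT : v i j ∈ T := by rw [hj]; exact hw
    rw [← hj, hpv j]
    have hy : Z j = (S.card + 1) * Rk' (v i j) := by
      rw [hZ]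
      simp only [if_pos hT, Nat.add_zero]
      rw [hcnt_at j, hRk', hlasti]
    rw [hy]
    simp only [if_pos hT]
  · have hi : i.val < r - 1 := by
      have h1 := i.isLt
      have h2 : i.val ≠ r - 1 := fun h => hlasti (Fin.ext (by rw [h, hilast]))
      omega
    rcases halign i hi with hmono | hanti
    · -- aligned increasingly with reference: x strictly increasing
      obtain ⟨p, hp, hpv⟩ := hvfree i
        (fun j => (Z j : ℝ))
        (fun j => if v i j ∈ T then (((S.card + 1) * Rk' (v i j) : ℕ) : ℝ) else 0)
        (fun a b hab => by dsimp only; exact_mod_cast hZmono hab)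
      refine ⟨p, hp, fun w hw => ?_⟩
      obtain ⟨j, hj⟩ := hsurjT w hw
      have hT : v i j ∈ T := by rw [hj]; exact hw
      rw [← hj, hpv j]
      have hx : Z j = (S.card + 1) * Rk (v i j) := by
        rw [hZ]
        simp only [if_pos hT, Nat.add_zero]
        rw [hcnt_at j, hRk]
        rw [rank_transfer (hρinjT i0) hmono (v i j) hT]
      rw [hx]
      simp only [if_pos hT]
    · -- aligned decreasingly: x strictly decreasing
      obtain ⟨p, hp, hpv⟩ := free_place_anti (hvfree i)
        (x := fun j => (((S.card + 1) * (T.card + 1) : ℕ) : ℝ) - (Z j : ℝ))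
        (y := fun j => if v i j ∈ T then (((S.card + 1) * Rk' (v i j) : ℕ) : ℝ) else 0)
        (fun a b hab => by
          have h1 : (Z a : ℝ) < (Z b : ℝ) := by exact_mod_cast hZmono hab
          dsimp only
          linarith)
      refine ⟨p, hp, fun w hw => ?_⟩
      obtain ⟨j, hj⟩ := hsurjT w hw
      have hT : v i j ∈ T := by rw [hj]; exact hw
      rw [← hj, hpv j]
      have hanti_card : cntf j + Rk (v i j) = T.card + 1 := by
        rw [hcnt_at j, hRk]
        rw [rank_transfer_anti (hρinjT i0) hanti (v i j) hT]
        exact anti_card (hρinjT i0) (v i j) hT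
      have hx : (((S.card + 1) * (T.card + 1) : ℕ) : ℝ) - (Z j : ℝ)
          = (((S.card + 1) * Rk (v i j) : ℕ) : ℝ) := by
        rw [hZ]
        simp only [if_pos hT, Nat.add_zero]
        have : (cntf j : ℝ) + (Rk (v i j) : ℝ) = (T.card : ℝ) + 1 := by
          exact_mod_cast hanti_card
        push_cast
        nlinarith [this]
      rw [hx]
      simp only [if_pos hT]
end

section
/- A triangulation (maximal planar graph) that admits a 2-page book embedding is Hamiltonian. -/
open SimpleGraph

section Aux

/-- Bound on the number of pairwise non-crossing chords of a path on points `0..m`,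
excluding the pair `(0,m)`. -/
lemma chords_bound : ∀ (m : ℕ) (C : Finset (ℕ × ℕ)),
    (∀ p ∈ C, p.1 + 2 ≤ p.2 ∧ p.2 ≤ m ∧ ¬(p.1 = 0 ∧ p.2 = m)) →
    (∀ p ∈ C, ∀ q ∈ C, ¬(p.1 < q.1 ∧ q.1 < p.2 ∧ p.2 < q.2)) →
    C.card ≤ m - 2 := by
  intro m
  induction m with
  | zero =>
    intro C hC _
    have : C = ∅ := Finset.eq_empty_of_forall_notMem (fun p hp => by
      have := hC p hp; omega)
    simp [this]
  | succ m IH =>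
    intro C hC hX
    rcases Finset.eq_empty_or_nonempty C with rfl | hne
    · simp
    obtain ⟨⟨i, j⟩, hijC, hmin⟩ := C.exists_min_image (fun p => p.2 - p.1) hne
    simp only at hmin
    have hij := hC _ hijC
    simp only at hij
    -- no chord has an endpoint at i+1
    have hno : ∀ q ∈ C, q.1 ≠ i + 1 ∧ q.2 ≠ i + 1 := by
      intro q hq
      have hq' := hC q hq
      constructor
      · intro h1
        -- q.1 = i+1
        rcases lt_or_ge j q.2 with h | h
        · exact hX ⟨i, j⟩ hijC q hq ⟨by omega, by omega, h⟩
        · have := hmin q hq; omega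
      · intro h2
        -- q.2 = i+1, so q.1 < i and crossing (q, (i,j))
        exact hX q hq ⟨i, j⟩ hijC ⟨by omega, by omega, by omega⟩
    -- contraction map removing the point i+1
    set g : ℕ → ℕ := fun k => if k ≤ i then k else k - 1 with hg
    have gmono : ∀ {k l : ℕ}, k ≤ l → g k ≤ g l := by
      intro k l h; simp only [hg]; split <;> split <;> omega
    have glt : ∀ {k l : ℕ}, g k < g l → k < l := by
      intro k l h; by_contra h'; exact absurd (gmono (by omega : l ≤ k)) (by omega)
    have ginj : ∀ {k l : ℕ}, k ≠ i + 1 → l ≠ i + 1 → g k = g l → k = l := by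
      intro k l hk hl h; simp only [hg] at h; split at h <;> split at h <;> omega
    set C0 : Finset (ℕ × ℕ) := C.erase ⟨i, j⟩ with hC0
    set C' : Finset (ℕ × ℕ) := C0.image (fun p => (g p.1, g p.2)) with hC'
    have hmem : ∀ q ∈ C0, q ∈ C ∧ q ≠ (i, j) := fun q hq =>
      ⟨Finset.mem_of_mem_erase hq, Finset.ne_of_mem_erase hq⟩
    -- chords conditions for C'
    have hC'cond : ∀ p ∈ C', p.1 + 2 ≤ p.2 ∧ p.2 ≤ m ∧ ¬(p.1 = 0 ∧ p.2 = m) := by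
      intro p hp
      obtain ⟨q, hq, rfl⟩ := Finset.mem_image.1 hp
      obtain ⟨hqC, hqne⟩ := hmem q hq
      obtain ⟨h2, hle, hne0⟩ := hC q hqC
      obtain ⟨hn1, hn2⟩ := hno q hqC
      have hgap : g q.1 + 2 ≤ g q.2 := by
        rcases le_or_gt q.2 i with h | h
        · simp only [hg]; rw [if_pos (by omega), if_pos h]; omega
        · rcases le_or_gt q.1 i with h' | h'
          · -- q.1 ≤ i < q.2, q.2 ≥ i+2
            have hq2 : i + 2 ≤ q.2 := by omega
            have : q.1 + 3 ≤ q.2 := by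
              by_contra hcon
              -- then q.2 = q.1 + 2, q.1 = i, q.2 = i+2
              have hq1 : q.1 = i := by omega
              have hq2' : q.2 = i + 2 := by omega
              -- if j = i+2 then q = (i,j) contradiction; else minimality violated
              have := hmin q hqC
              have : j = i + 2 := by omega
              apply hqne
              have : q = (q.1, q.2) := rfl
              rw [this, hq1, hq2']
              simp [‹j = i + 2›]
            simp only [hg]; rw [if_pos h', if_neg (by omega)]; omega
          · simp only [hg]; rw [if_neg (by omega), if_neg (by omega)]; omega
      refine ⟨hgap, ?_, ?_⟩
      · rcases le_or_gt q.2 i with h | h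
        · simp only [hg]; rw [if_pos h]; omega
        · simp only [hg]; rw [if_neg (by omega)]; omega
      · rintro ⟨h0, hm⟩
        have hq1 : q.1 = 0 := by
          simp only [hg] at h0; split at h0 <;> omega
        have : q.2 = m + 1 := by
          simp only [hg] at hm; split at hm <;> omega
        exact hne0 ⟨hq1, this⟩
    have hC'X : ∀ p ∈ C', ∀ q ∈ C', ¬(p.1 < q.1 ∧ q.1 < p.2 ∧ p.2 < q.2) := by
      rintro p hp q hq ⟨h1, h2, h3⟩
      obtain ⟨p', hp', hpe⟩ := Finset.mem_image.1 hp
      obtain ⟨q', hq', hqe⟩ := Finset.mem_image.1 hq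
      have e1 : g p'.1 = p.1 := by rw [← hpe]
      have e2 : g p'.2 = p.2 := by rw [← hpe]
      have e3 : g q'.1 = q.1 := by rw [← hqe]
      have e4 : g q'.2 = q.2 := by rw [← hqe]
      exact hX p' (hmem p' hp').1 q' (hmem q' hq').1
        ⟨glt (by rw [e1, e3]; exact h1), glt (by rw [e3, e2]; exact h2),
         glt (by rw [e2, e4]; exact h3)⟩
    have hcard : C'.card = C0.card := by
      apply Finset.card_image_of_injOn
      intro p hp q hq h
      obtain ⟨hpC, _⟩ := hmem p hp
      obtain ⟨hqC, _⟩ := hmem q hq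
      have h1 : g p.1 = g q.1 ∧ g p.2 = g q.2 := Prod.mk.injEq .. ▸ h
      have := ginj (hno p hpC).1 (hno q hqC).1 h1.1
      have := ginj (hno p hpC).2 (hno q hqC).2 h1.2
      exact Prod.ext ‹p.1 = q.1› ‹p.2 = q.2›
    have := IH C' hC'cond hC'X
    have h0 : C0.card = C.card - 1 := by rw [hC0, Finset.card_erase_of_mem hijC]
    have hpos : 1 ≤ C.card := Finset.card_pos.2 hne
    omega

lemma walk_of_chain {V : Type*} (G : SimpleGraph V) (w : ℕ → V) :
    ∀ (g k : ℕ), (∀ t, k ≤ t → t < k + g → G.Adj (w t) (w (t+1))) →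
    ∃ p : G.Walk (w k) (w (k+g)),
      p.support = (List.range' k (g+1)).map w ∧
      p.edges = (List.range' k g).map (fun t => s(w t, w (t+1))) := by
  intro g
  induction g with
  | zero => intro k _; exact ⟨Walk.nil, by simp, by simp⟩
  | succ g IH =>
    intro k hc
    obtain ⟨p', hs, he⟩ := IH (k+1) (fun t ht ht' => hc t (by omega) (by omega))
    have hadj : G.Adj (w k) (w (k+1)) := hc k le_rfl (by omega)
    refine ⟨(Walk.cons hadj p').copy rfl (congrArg w (by omega)), ?_, ?_⟩
    · rw [Walk.support_copy, Walk.support_cons, hs]; simp [List.range'_succ]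
    · rw [Walk.edges_copy, Walk.edges_cons, he]; simp [List.range'_succ]

lemma spine_ham {V : Type*} [Fintype V] [DecidableEq V] (G : SimpleGraph V)
    (n : ℕ) (hn3 : 3 ≤ n) (w : ℕ → V)
    (hinj : ∀ k l, k < n → l < n → w k = w l → k = l)
    (hsurj : ∀ v : V, ∃ k, k < n ∧ w k = v)
    (hadj : ∀ t, t + 1 < n → G.Adj (w t) (w (t+1)))
    (hlast : G.Adj (w (n-1)) (w 0)) :
    G.IsHamiltonian := by
  intro _
  obtain ⟨p1, hs1, he1⟩ := walk_of_chain G w (n-2) 1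
    (fun t ht ht' => hadj t (by omega))
  have hcast : w (1 + (n-2)) = w (n-1) := congrArg w (by omega)
  set q : G.Walk (w 1) (w 0) :=
    (p1.copy rfl hcast).append (Walk.cons hlast Walk.nil) with hq
  have hqs : q.support = (List.range' 1 (n-1) ++ [0]).map w := by
    rw [hq, Walk.support_append, Walk.support_copy, hs1]
    have h21 : n - 2 + 1 = n - 1 := by omega
    rw [h21]
    simp
  -- the index list
  have hlmem : ∀ x ∈ List.range' 1 (n-1) ++ [0], x < n := by
    intro x hx
    rcases List.mem_append.1 hx with h | h
    · have := List.mem_range'_1.1 h; omega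
    · simp at h; omega
  have hlnd : (List.range' 1 (n-1) ++ [0]).Nodup := by
    rw [List.nodup_append]
    refine ⟨List.nodup_range', List.nodup_singleton 0, ?_⟩
    intro x hx
    have := List.mem_range'_1.1 hx
    simp
    omega
  have hqnd : q.support.Nodup := by
    rw [hqs]
    exact hlnd.map_on (fun x hx y hy hxy => hinj x y (hlmem x hx) (hlmem y hy) hxy)
  have hqpath : q.IsPath := (Walk.isPath_def q).2 hqnd
  have hqe : q.edges = (List.range' 1 (n-2)).map (fun t => s(w t, w (t+1)))
      ++ [s(w (n-1), w 0)] := by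
    rw [hq, Walk.edges_append, Walk.edges_copy, he1]
    simp
  have hnotmem : s(w 0, w 1) ∉ q.edges := by
    rw [hqe]
    intro hmem
    rcases List.mem_append.1 hmem with h | h
    · obtain ⟨t, ht, hte⟩ := List.mem_map.1 h
      have ht' := List.mem_range'_1.1 ht
      rw [Sym2.eq_iff] at hte
      rcases hte with ⟨h1, h2⟩ | ⟨h1, h2⟩
      · have := hinj t 0 (by omega) (by omega) h1; omega
      · have := hinj (t+1) 0 (by omega) (by omega) h2; omega
    · simp only [List.mem_singleton] at h
      rw [Sym2.eq_iff] at h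
      rcases h with ⟨h1, h2⟩ | ⟨h1, h2⟩
      · have := hinj 0 (n-1) (by omega) (by omega) h1; omega
      · have := hinj 1 (n-1) (by omega) (by omega) h2; omega
  set c : G.Walk (w 0) (w 0) := Walk.cons (hadj 0 (by omega)) q with hc
  refine ⟨w 0, c, ?_⟩
  rw [Walk.isHamiltonianCycle_iff_isCycle_and_support_count_tail_eq_one]
  constructor
  · exact (Walk.cons_isCycle_iff q (hadj 0 (by omega))).2 ⟨hqpath, hnotmem⟩
  · intro a
    have : c.support.tail = q.support := by rw [hc, Walk.support_cons]; rfl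
    rw [this, hqs]
    obtain ⟨k, hk, rfl⟩ := hsurj a
    have hmemk : k ∈ List.range' 1 (n-1) ++ [0] := by
      rcases Nat.eq_zero_or_pos k with rfl | hkpos
      · simp
      · exact List.mem_append.2 (Or.inl (List.mem_range'_1.2 ⟨by omega, by omega⟩))
    refine List.count_eq_one_of_mem ?_ (List.mem_map_of_mem (f := w) hmemk)
    exact hlnd.map_on (fun x hx y hy hxy => hinj x y (hlmem x hx) (hlmem y hy) hxy)

end Aux

/-- A triangulation (an `n`-vertex planar graph with `3n − 6` edges, `n ≥ 3`)
that admits a 2-page book embedding is Hamiltonian. -/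
theorem stmt_18 {V : Type*} [Fintype V] [DecidableEq V] (G : SimpleGraph V)
    [DecidableRel G.Adj] (n : ℕ) (hn : n = Fintype.card V) (hn3 : 3 ≤ n)
    (hplanar : IsPlanar G) (hedges : G.edgeFinset.card = 3 * n - 6)
    (hbook : ∃ (σ : V ≃ Fin n) (page : V → V → Bool),
      (∀ u v, page u v = page v u) ∧
      ∀ a b c d : V, G.Adj a b → G.Adj c d → page a b = page c d →
        ¬(σ a < σ c ∧ σ c < σ b ∧ σ b < σ d)) :
    G.IsHamiltonian := by
  obtain ⟨σ, page, hpsym, hpx⟩ := hbook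
  -- map each edge to its (ordered) pair of spine positions
  set f : Sym2 V → ℕ × ℕ := Sym2.lift ⟨fun u v =>
      (min (σ u : ℕ) (σ v : ℕ), max (σ u : ℕ) (σ v : ℕ)),
      fun u v => by simp [min_comm, max_comm]⟩ with hf
  have hfinj : Function.Injective f := by
    intro e₁ e₂ h
    induction e₁ using Sym2.ind with | _ a b =>
    induction e₂ using Sym2.ind with | _ c d =>
    simp only [hf, Sym2.lift_mk] at h
    have h1 : min (σ a : ℕ) (σ b : ℕ) = min (σ c : ℕ) (σ d : ℕ) := congrArg Prod.fst h
    have h2 : max (σ a : ℕ) (σ b : ℕ) = max (σ c : ℕ) (σ d : ℕ) := congrArg Prod.snd h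
    have hor : ((σ a : ℕ) = (σ c : ℕ) ∧ (σ b : ℕ) = (σ d : ℕ)) ∨
        ((σ a : ℕ) = (σ d : ℕ) ∧ (σ b : ℕ) = (σ c : ℕ)) := by omega
    have key : ∀ {x y : V}, (σ x : ℕ) = (σ y : ℕ) → x = y := by
      intro x y hxy
      exact σ.injective (Fin.ext hxy)
    rw [Sym2.eq_iff]
    rcases hor with ⟨ha, hb⟩ | ⟨ha, hb⟩
    · exact Or.inl ⟨key ha, key hb⟩
    · exact Or.inr ⟨key ha, key hb⟩
  set E' : Finset (ℕ × ℕ) := G.edgeFinset.image f with hE'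
  have hE'card : E'.card = 3 * n - 6 := by
    rw [hE', Finset.card_image_of_injective _ hfinj, hedges]
  have hmemE : ∀ p ∈ E', ∃ u v, G.Adj u v ∧ (σ u : ℕ) = p.1 ∧ (σ v : ℕ) = p.2 ∧
      p.1 < p.2 ∧ p.2 < n := by
    intro p hp
    obtain ⟨e, he, hfe⟩ := Finset.mem_image.1 hp
    induction e using Sym2.ind with | _ u v =>
    have hadj : G.Adj u v := (mem_edgeFinset).1 he
    have hne : (σ u : ℕ) ≠ (σ v : ℕ) := fun hc =>
      hadj.ne (σ.injective (Fin.ext hc))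
    simp only [hf, Sym2.lift_mk] at hfe
    rcases lt_or_gt_of_ne hne with hlt | hlt
    · have hp' : p = ((σ u : ℕ), (σ v : ℕ)) := by
        rw [← hfe, min_eq_left hlt.le, max_eq_right hlt.le]
      subst hp'
      exact ⟨u, v, hadj, rfl, rfl, hlt, (σ v).isLt⟩
    · have hp' : p = ((σ v : ℕ), (σ u : ℕ)) := by
        rw [← hfe, min_eq_right hlt.le, max_eq_left hlt.le]
      subst hp'
      exact ⟨v, u, hadj.symm, rfl, rfl, hlt, (σ u).isLt⟩
  have hmemE' : ∀ u v, G.Adj u v → (σ u : ℕ) < (σ v : ℕ) →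
      ((σ u : ℕ), (σ v : ℕ)) ∈ E' := by
    intro u v hadj hlt
    rw [hE', Finset.mem_image]
    refine ⟨s(u, v), mem_edgeFinset.2 hadj, ?_⟩
    simp only [hf, Sym2.lift_mk]
    rw [min_eq_left hlt.le, max_eq_right hlt.le]
  -- page of a pair
  set pg : ℕ × ℕ → Bool := fun p =>
    if h : p.1 < n ∧ p.2 < n then page (σ.symm ⟨p.1, h.1⟩) (σ.symm ⟨p.2, h.2⟩)
    else true with hpg
  have hpgeq : ∀ u v : V, pg ((σ u : ℕ), (σ v : ℕ)) = page u v := by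
    intro u v
    have h : ((σ u : ℕ), (σ v : ℕ)).1 < n ∧ ((σ u : ℕ), (σ v : ℕ)).2 < n :=
      ⟨(σ u).isLt, (σ v).isLt⟩
    simp only [hpg]
    rw [dif_pos h]
    simp
  -- short edges and chords
  set Pshort : ℕ × ℕ → Prop := fun p => p.2 = p.1 + 1 ∨ (p.1 = 0 ∧ p.2 = n - 1)
    with hPs
  have : DecidablePred Pshort := fun p => by rw [hPs]; infer_instance
  set S : Finset (ℕ × ℕ) := E'.filter Pshort with hS
  set D : Finset (ℕ × ℕ) := E'.filter (fun p => ¬ Pshort p) with hD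
  have hsplit1 : S.card + D.card = E'.card := Finset.card_filter_add_card_filter_not _
  set Dt : Finset (ℕ × ℕ) := D.filter (fun p => pg p = true) with hDt
  set Df : Finset (ℕ × ℕ) := D.filter (fun p => ¬ (pg p = true)) with hDf
  have hsplit2 : Dt.card + Df.card = D.card := Finset.card_filter_add_card_filter_not _
  -- chord bounds per page
  have hbound : ∀ b : Bool, ∀ B : Finset (ℕ × ℕ),
      (B = Dt ∨ B = Df) → (∀ p ∈ B, pg p = b) → B.card ≤ (n - 1) - 2 := by
    intro b B hB hBpg
    have hBD : ∀ p ∈ B, p ∈ E' ∧ ¬ Pshort p := by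
      intro p hp
      rcases hB with rfl | rfl
      · have := Finset.mem_filter.1 hp
        have := Finset.mem_filter.1 this.1
        exact ⟨this.1, this.2⟩
      · have := Finset.mem_filter.1 hp
        have := Finset.mem_filter.1 this.1
        exact ⟨this.1, this.2⟩
    apply chords_bound (n - 1) B
    · intro p hp
      obtain ⟨hpE, hpns⟩ := hBD p hp
      obtain ⟨u, v, _, _, _, hlt, hlt2⟩ := hmemE p hpE
      simp only [hPs] at hpns
      push_neg at hpns
      obtain ⟨hn1, hn2⟩ := hpns
      exact ⟨by omega, by omega, fun ⟨h0, h1⟩ => hn2 h0 h1⟩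
    · rintro p hp q hq ⟨h1, h2, h3⟩
      obtain ⟨hpE, hpns⟩ := hBD p hp
      obtain ⟨hqE, hqns⟩ := hBD q hq
      obtain ⟨u, v, huv, hu, hv, hltp, _⟩ := hmemE p hpE
      obtain ⟨x, y, hxy, hx, hy, hltq, _⟩ := hmemE q hqE
      have hpgp : pg p = b := hBpg p hp
      have hpgq : pg q = b := hBpg q hq
      have hpe : p = ((σ u : ℕ), (σ v : ℕ)) := by
        rw [hu, hv]
      have hqe : q = ((σ x : ℕ), (σ y : ℕ)) := by
        rw [hx, hy]
      have hpageuv : page u v = b := by rw [← hpgeq, ← hpe]; exact hpgp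
      have hpagexy : page x y = b := by rw [← hpgeq, ← hqe]; exact hpgq
      refine hpx u v x y huv hxy (by rw [hpageuv, hpagexy]) ?_
      refine ⟨?_, ?_, ?_⟩ <;> rw [Fin.lt_def] <;> omega
  have hDtb : Dt.card ≤ (n - 1) - 2 :=
    hbound true Dt (Or.inl rfl) (fun p hp => (Finset.mem_filter.1 hp).2)
  have hDfb : Df.card ≤ (n - 1) - 2 :=
    hbound false Df (Or.inr rfl) (fun p hp => by
      have := (Finset.mem_filter.1 hp).2
      simp only [Bool.not_eq_true] at this
      exact this)
  -- the set of potential spine edges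
  set T : Finset (ℕ × ℕ) := ((Finset.range (n-1)).image (fun i => (i, i+1))) ∪ {(0, n-1)}
    with hT
  have hTcard : T.card = n := by
    rw [hT, Finset.card_union_of_disjoint, Finset.card_image_of_injective,
      Finset.card_range, Finset.card_singleton]
    · omega
    · intro a b hab
      exact (Prod.mk.injEq _ _ _ _ ▸ hab).1
    · rw [Finset.disjoint_singleton_right, Finset.mem_image]
      rintro ⟨i, hi, he⟩
      have h1 : i = 0 := (Prod.mk.injEq _ _ _ _ ▸ he).1
      have h2 : i + 1 = n - 1 := (Prod.mk.injEq _ _ _ _ ▸ he).2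
      omega
  have hST : S ⊆ T := by
    intro p hp
    obtain ⟨hpE, hps⟩ := Finset.mem_filter.1 hp
    obtain ⟨u, v, _, _, _, hlt, hlt2⟩ := hmemE p hpE
    simp only [hPs] at hps
    rw [hT, Finset.mem_union]
    rcases hps with h | ⟨h0, h1⟩
    · left
      rw [Finset.mem_image]
      exact ⟨p.1, Finset.mem_range.2 (by omega), by rw [← h]⟩
    · right
      simp only [Finset.mem_singleton]
      rw [← h0, ← h1]
  have hScard : n ≤ S.card := by
    have := Finset.card_le_card hST
    rw [hTcard] at this
    omega
  have hSeq : S = T := Finset.eq_of_subset_of_card_le hST (by omega)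
  -- extract spine adjacencies
  have hTE : ∀ p ∈ T, p ∈ E' := by
    intro p hp
    rw [← hSeq] at hp
    exact (Finset.mem_filter.1 hp).1
  set w : ℕ → V := fun k => if h : k < n then σ.symm ⟨k, h⟩ else σ.symm ⟨0, by omega⟩
    with hw
  have hwval : ∀ k (h : k < n), (σ (w k) : ℕ) = k := by
    intro k h
    rw [hw]
    simp only [dif_pos h]
    rw [Equiv.apply_symm_apply]
  have hinj : ∀ k l, k < n → l < n → w k = w l → k = l := by
    intro k l hk hl he
    have := congrArg (fun x => (σ x : ℕ)) he
    rw [hwval k hk, hwval l hl] at this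
    exact this
  have hsurj : ∀ v : V, ∃ k, k < n ∧ w k = v := by
    intro v
    refine ⟨(σ v : ℕ), (σ v).isLt, ?_⟩
    rw [hw]
    simp only [dif_pos (σ v).isLt]
    rw [Fin.eta, Equiv.symm_apply_apply]
  have hedge_of_mem : ∀ p ∈ E', G.Adj (w p.1) (w p.2) := by
    intro p hp
    obtain ⟨u, v, hadj, hu, hv, hlt, hlt2⟩ := hmemE p hp
    have hu' : u = w p.1 := by
      have h1 : p.1 < n := by omega
      have : (σ u : ℕ) = (σ (w p.1) : ℕ) := by rw [hu, hwval p.1 h1]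
      exact σ.injective (Fin.ext this)
    have hv' : v = w p.2 := by
      have h2 : p.2 < n := hlt2
      have : (σ v : ℕ) = (σ (w p.2) : ℕ) := by rw [hv, hwval p.2 h2]
      exact σ.injective (Fin.ext this)
    rw [← hu', ← hv']
    exact hadj
  have hadjspine : ∀ t, t + 1 < n → G.Adj (w t) (w (t+1)) := by
    intro t ht
    have hmem : ((t : ℕ), t + 1) ∈ T := by
      rw [hT, Finset.mem_union]
      left
      rw [Finset.mem_image]
      exact ⟨t, Finset.mem_range.2 (by omega), rfl⟩
    exact hedge_of_mem _ (hTE _ hmem)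
  have hlast : G.Adj (w (n-1)) (w 0) := by
    have hmem : ((0 : ℕ), n - 1) ∈ T := by
      rw [hT, Finset.mem_union]
      right
      simp
    exact (hedge_of_mem _ (hTE _ hmem)).symm
  exact spine_ham G n hn3 w hinj hsurj hadjspine hlast
end
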